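/- arXiv:2509.09739 — 7 statements merged into one kernel-verified Lean document; each statement's English description precedes it below -/
import Mathlib

section
/- Let n ≥ 1, let V : ℝⁿ → ℂ be continuous, and let f : ℝⁿ → ℂ be C² with -Δf + V·f = 0 on ℝⁿ. Then for every compactly supported C¹ function χ : ℝⁿ → ℝ, one has −∫_{ℝⁿ} ⟨∇χ(x), conj(f(x))·∇f(x) − f(x)·∇(conj f)(x)⟩ dx = 2i·∫_{ℝⁿ} Im(V(x))·|f(x)|²·χ(x) dx, where ⟨·,·⟩ is the pairing of the real vector ∇χ with the ℂⁿ-valued field (sum over coordinates of the product of components). -/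
noncomputable section

open MeasureTheory Complex

/-- Partial derivative in the `i`-th coordinate direction of a complex-valued function. -/
def cpderiv {n : ℕ} (f : EuclideanSpace ℝ (Fin n) → ℂ) (i : Fin n)
    (x : EuclideanSpace ℝ (Fin n)) : ℂ :=
  fderiv ℝ f x (EuclideanSpace.single i 1)

/-- Partial derivative in the `i`-th coordinate direction of a real-valued function. -/
def rpderiv {n : ℕ} (g : EuclideanSpace ℝ (Fin n) → ℝ) (i : Fin n)
    (x : EuclideanSpace ℝ (Fin n)) : ℝ :=
  fderiv ℝ g x (EuclideanSpace.single i 1)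

/-- The Euclidean Laplacian of a complex-valued function, acting componentwise. -/
def claplacian {n : ℕ} (f : EuclideanSpace ℝ (Fin n) → ℂ)
    (x : EuclideanSpace ℝ (Fin n)) : ℂ :=
  ∑ i, cpderiv (cpderiv f i) i x

/-- The (complex, componentwise) gradient of a complex-valued function. -/
def cgrad {n : ℕ} (f : EuclideanSpace ℝ (Fin n) → ℂ)
    (x : EuclideanSpace ℝ (Fin n)) : EuclideanSpace ℂ (Fin n) :=
  (WithLp.equiv 2 (Fin n → ℂ)).symm (fun i => cpderiv f i x)

/-- The real gradient of a real-valued function. -/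
def rgrad {n : ℕ} (g : EuclideanSpace ℝ (Fin n) → ℝ)
    (x : EuclideanSpace ℝ (Fin n)) : EuclideanSpace ℝ (Fin n) :=
  (WithLp.equiv 2 (Fin n → ℝ)).symm (fun i => rpderiv g i x)

variable {n : ℕ}
local notation "E" => EuclideanSpace ℝ (Fin n)

section aux

lemma int_fderiv_zero_real (u : E → ℝ)
    (hu : ContDiff ℝ 1 u) (hc : HasCompactSupport u) (v : E) :
    ∫ x, fderiv ℝ u x v = 0 := by
  obtain ⟨C, hC⟩ := hu.lipschitzWith_of_hasCompactSupport hc one_ne_zero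
  have h1 : LipschitzWith 0 (fun _ : E => (1 : ℝ)) := LipschitzWith.const 1
  have key := LipschitzWith.integral_lineDeriv_mul_eq (μ := volume) h1 hC hc v
  have hz : ∀ x : E, lineDeriv ℝ (fun _ => (1:ℝ)) x v = 0 := by
    intro x
    rw [(differentiable_const (1:ℝ) x).lineDeriv_eq_fderiv]
    simp
  simp only [hz, zero_mul, integral_zero] at key
  have : ∀ x : E, lineDeriv ℝ u x (-v) = - fderiv ℝ u x v := by
    intro x
    rw [(hu.differentiable one_ne_zero x).lineDeriv_eq_fderiv]
    simp
  simp only [this, mul_one, integral_neg, neg_eq_zero] at key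
  rw [← neg_eq_zero]
  exact key.symm

lemma re_fderiv (u : E → ℂ) (hu : Differentiable ℝ u) (v : E) (x : E) :
    fderiv ℝ (fun y => (u y).re) x v = (fderiv ℝ u x v).re := by
  have : (fun y => (u y).re) = Complex.reCLM ∘ u := rfl
  rw [this, fderiv_comp x (Complex.reCLM.differentiableAt) (hu x),
    ContinuousLinearMap.fderiv]
  rfl

lemma im_fderiv (u : E → ℂ) (hu : Differentiable ℝ u) (v : E) (x : E) :
    fderiv ℝ (fun y => (u y).im) x v = (fderiv ℝ u x v).im := by
  have : (fun y => (u y).im) = Complex.imCLM ∘ u := rfl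
  rw [this, fderiv_comp x (Complex.imCLM.differentiableAt) (hu x),
    ContinuousLinearMap.fderiv]
  rfl

lemma int_fderiv_zero_complex (u : E → ℂ)
    (hu : ContDiff ℝ 1 u) (hc : HasCompactSupport u) (v : E) :
    ∫ x, fderiv ℝ u x v = 0 := by
  have hre : ContDiff ℝ 1 (fun y => (u y).re) := Complex.reCLM.contDiff.comp hu
  have him : ContDiff ℝ 1 (fun y => (u y).im) := Complex.imCLM.contDiff.comp hu
  have hcr : HasCompactSupport (fun y => (u y).re) := hc.comp_left (by simp)
  have hci : HasCompactSupport (fun y => (u y).im) := hc.comp_left (by simp)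
  have h1 := int_fderiv_zero_real _ hre hcr v
  have h2 := int_fderiv_zero_real _ him hci v
  simp only [re_fderiv u (hu.differentiable one_ne_zero), im_fderiv u (hu.differentiable one_ne_zero)]
    at h1 h2
  have hcont : Continuous fun x => fderiv ℝ u x v :=
    (hu.continuous_fderiv one_ne_zero).clm_apply continuous_const
  have hsupp : HasCompactSupport fun x => fderiv ℝ u x v := hc.fderiv_apply ℝ v
  have hint : Integrable (fun x => fderiv ℝ u x v) := hcont.integrable_of_hasCompactSupport hsupp
  apply Complex.ext
  · show RCLike.re (∫ x, fderiv ℝ u x v) = RCLike.re (0 : ℂ)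
    rw [← integral_re hint, map_zero]
    exact h1
  · show RCLike.im (∫ x, fderiv ℝ u x v) = RCLike.im (0 : ℂ)
    rw [← integral_im hint, map_zero]
    exact h2

lemma conj_cpderiv (u : E → ℂ) (hu : Differentiable ℝ u) (i : Fin n) (x : E) :
    cpderiv (fun z => star (u z)) i x = star (cpderiv u i x) := by
  have h : (fun z => star (u z)) = ⇑(Complex.conjCLE) ∘ u := rfl
  rw [cpderiv, h, fderiv_comp x (Complex.conjCLE.differentiableAt) (hu x),
    ContinuousLinearEquiv.fderiv]
  rfl

lemma cpderiv_mul {u v : E → ℂ} {x : E} (hu : DifferentiableAt ℝ u x)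
    (hv : DifferentiableAt ℝ v x) (i : Fin n) :
    cpderiv (fun y => u y * v y) i x = u x * cpderiv v i x + v x * cpderiv u i x := by
  rw [cpderiv, fderiv_fun_mul hu hv]
  simp [cpderiv, smul_eq_mul]

lemma cpderiv_sub {u v : E → ℂ} {x : E} (hu : DifferentiableAt ℝ u x)
    (hv : DifferentiableAt ℝ v x) (i : Fin n) :
    cpderiv (fun y => u y - v y) i x = cpderiv u i x - cpderiv v i x := by
  rw [cpderiv, fderiv_fun_sub hu hv]
  simp [cpderiv]

lemma cpderiv_ofReal {χ : E → ℝ} {x : E} (hχ : DifferentiableAt ℝ χ x) (i : Fin n) :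
    cpderiv (fun y => ((χ y : ℝ) : ℂ)) i x = ((rpderiv χ i x : ℝ) : ℂ) := by
  have h : (fun y => ((χ y : ℝ) : ℂ)) = ⇑(Complex.ofRealCLM) ∘ χ := rfl
  rw [cpderiv, h, fderiv_comp x (Complex.ofRealCLM.differentiableAt) hχ]
  simp [rpderiv]

lemma alg_identity (a v : ℂ) :
    star a * (v * a) - a * star (v * a) = 2 * Complex.I * (((v.im * ‖a‖ ^ 2 : ℝ)) : ℂ) := by
  have h1 : a * star a = ((‖a‖ ^ 2 : ℝ) : ℂ) := by
    rw [show (star a) = (starRingEnd ℂ) a from rfl, Complex.mul_conj, Complex.normSq_eq_norm_sq]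
  have h2 : v - star v = ((2 * v.im : ℝ) : ℂ) * Complex.I := Complex.sub_conj v
  calc star a * (v * a) - a * star (v * a)
      = (a * star a) * (v - star v) := by rw [star_mul]; ring
    _ = _ := by rw [h1, h2]; push_cast; ring

end aux

/-- Testing the main differential identity against a compactly supported `C¹` cutoff `χ`:
`−∫ ⟨∇χ, conj f · ∇f − f · ∇(conj f)⟩ = 2i ∫ Im(V) |f|² χ`. -/
theorem tested_identity {n : ℕ} (hn : 1 ≤ n)
    (V f : EuclideanSpace ℝ (Fin n) → ℂ)
    (hV : Continuous V) (hf : ContDiff ℝ 2 f)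
    (heq : ∀ x, -claplacian f x + V x * f x = 0) :
    ∀ χ : EuclideanSpace ℝ (Fin n) → ℝ, ContDiff ℝ 1 χ → HasCompactSupport χ →
      -(∫ x, ∑ i, (rpderiv χ i x : ℂ) *
          (star (f x) * cpderiv f i x - f x * cpderiv (fun z => star (f z)) i x))
        = 2 * Complex.I * ((∫ x, (V x).im * ‖f x‖ ^ 2 * χ x : ℝ) : ℂ) := by
  intro χ hχ hχc
  have hf1 : ContDiff ℝ 1 f := hf.of_le one_le_two
  have hdf : Differentiable ℝ f := hf1.differentiable one_ne_zero
  have hD : ∀ i, ContDiff ℝ 1 (cpderiv f i) := fun i =>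
    (hf.fderiv_right (by norm_num)).clm_apply contDiff_const
  have hdD : ∀ i, Differentiable ℝ (cpderiv f i) := fun i => (hD i).differentiable one_ne_zero
  -- the vector field components
  set g : Fin n → EuclideanSpace ℝ (Fin n) → ℂ :=
    fun i x => star (f x) * cpderiv f i x - f x * star (cpderiv f i x) with hg_def
  have hstar : ∀ u : EuclideanSpace ℝ (Fin n) → ℂ, ContDiff ℝ 1 u →
      ContDiff ℝ 1 (fun x => star (u x)) := by
    intro u hu
    exact (Complex.conjCLE.contDiff).comp hu
  have hg : ∀ i, ContDiff ℝ 1 (g i) := fun i =>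
    (((hstar f hf1).mul (hD i)).sub (hf1.mul (hstar _ (hD i))))
  set F : Fin n → EuclideanSpace ℝ (Fin n) → ℂ :=
    fun i x => ((χ x : ℝ) : ℂ) * g i x with hF_def
  have hχC : ContDiff ℝ 1 (fun x => ((χ x : ℝ) : ℂ)) := Complex.ofRealCLM.contDiff.comp hχ
  have hFc : ∀ i, ContDiff ℝ 1 (F i) := fun i => hχC.mul (hg i)
  have hχcC : HasCompactSupport (fun x => ((χ x : ℝ) : ℂ)) :=
    hχc.comp_left (g := Complex.ofReal) (by simp)
  have hFsupp : ∀ i, HasCompactSupport (F i) := fun i => hχcC.mul_right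
  -- integral of each derivative vanishes
  have hzero : ∀ i, ∫ x, cpderiv (F i) i x = 0 := fun i =>
    int_fderiv_zero_complex (F i) (hFc i) (hFsupp i) (EuclideanSpace.single i 1)
  -- pointwise product rule
  have key1 : ∀ i x, cpderiv (F i) i x
      = ((rpderiv χ i x : ℝ) : ℂ) * g i x + ((χ x : ℝ) : ℂ) * cpderiv (g i) i x := by
    intro i x
    rw [hF_def]
    rw [cpderiv_mul (hχC.differentiable one_ne_zero x) ((hg i).differentiable one_ne_zero x) i,
      cpderiv_ofReal (hχ.differentiable one_ne_zero x) i]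
    ring
  -- pointwise second-derivative identity
  have key2 : ∀ i x, cpderiv (g i) i x
      = star (f x) * cpderiv (cpderiv f i) i x - f x * star (cpderiv (cpderiv f i) i x) := by
    intro i x
    rw [hg_def]
    have h1 : cpderiv (fun y => star (f y) * cpderiv f i y) i x
        = star (f x) * cpderiv (cpderiv f i) i x + cpderiv f i x * star (cpderiv f i x) := by
      rw [cpderiv_mul ((hstar f hf1).differentiable one_ne_zero x) (hdD i x) i,
        conj_cpderiv f hdf i x]
    have h2 : cpderiv (fun y => f y * star (cpderiv f i y)) i x
        = f x * star (cpderiv (cpderiv f i) i x) + star (cpderiv f i x) * cpderiv f i x := by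
      rw [cpderiv_mul (hdf x) ((hstar _ (hD i)).differentiable one_ne_zero x) i,
        conj_cpderiv (cpderiv f i) (hdD i) i x]
    rw [cpderiv_sub (((hstar f hf1).mul (hD i)).differentiable one_ne_zero x)
        ((hf1.mul (hstar _ (hD i))).differentiable one_ne_zero x) i, h1, h2]
    ring
  have hlap : ∀ x, claplacian f x = V x * f x := fun x => by linear_combination -(heq x)
  -- the two pieces
  set A : EuclideanSpace ℝ (Fin n) → ℂ :=
    fun x => ∑ i, ((rpderiv χ i x : ℝ) : ℂ) * g i x with hA_def
  set B : EuclideanSpace ℝ (Fin n) → ℂ :=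
    fun x => 2 * Complex.I * ((((V x).im * ‖f x‖ ^ 2 * χ x : ℝ)) : ℂ) with hB_def
  have ptwise : ∀ x, (∑ i, cpderiv (F i) i x) = A x + B x := by
    intro x
    rw [hA_def, hB_def]
    simp only [key1, key2, Finset.sum_add_distrib]
    congr 1
    rw [← Finset.mul_sum, Finset.sum_sub_distrib, ← Finset.mul_sum, ← Finset.mul_sum,
      ← star_sum]
    have : (∑ i, cpderiv (cpderiv f i) i x) = claplacian f x := rfl
    rw [this, hlap x, alg_identity (f x) (V x)]
    push_cast
    ring
  -- continuity facts
  have hrpd : ∀ i, Continuous (fun x => rpderiv χ i x) := fun i =>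
    (hχ.continuous_fderiv one_ne_zero).clm_apply continuous_const
  have hgc : ∀ i, Continuous (g i) := fun i => (hg i).continuous
  -- integrability
  have hA_int : Integrable A := by
    apply integrable_finset_sum
    intro i _
    apply Continuous.integrable_of_hasCompactSupport
    · exact (Complex.continuous_ofReal.comp (hrpd i)).mul (hgc i)
    · have hs : HasCompactSupport (fun x => rpderiv χ i x) :=
        hχc.fderiv_apply ℝ (EuclideanSpace.single i 1)
      exact (hs.comp_left (g := Complex.ofReal) (by simp)).mul_right
  have hq_cont : Continuous (fun x => (V x).im * ‖f x‖ ^ 2 * χ x) :=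
    ((Complex.continuous_im.comp hV).mul ((hf.continuous.norm).pow 2)).mul hχ.continuous
  have hq_supp : HasCompactSupport (fun x => (V x).im * ‖f x‖ ^ 2 * χ x) := hχc.mul_left
  have hB_int : Integrable B := by
    apply Continuous.integrable_of_hasCompactSupport
    · exact continuous_const.mul (Complex.continuous_ofReal.comp hq_cont)
    · exact (hq_supp.comp_left (g := Complex.ofReal) (by simp)).comp_left
        (g := fun z : ℂ => 2 * Complex.I * z) (by simp)
  have hFi_int : ∀ i, Integrable (fun x => cpderiv (F i) i x) := fun i => by
    apply Continuous.integrable_of_hasCompactSupport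
    · exact ((hFc i).continuous_fderiv one_ne_zero).clm_apply continuous_const
    · exact (hFsupp i).fderiv_apply ℝ (EuclideanSpace.single i 1)
  -- putting the integrals together
  have hsum : ∫ x, (∑ i, cpderiv (F i) i x) = 0 := by
    rw [integral_finset_sum _ (fun i _ => hFi_int i)]
    simp [hzero]
  have hAB : ∫ x, (A x + B x) = 0 := by
    rw [← hsum]
    exact integral_congr_ae (Filter.Eventually.of_forall fun x => (ptwise x).symm)
  rw [integral_add hA_int hB_int] at hAB
  have hABeq : -(∫ x, A x) = ∫ x, B x := by linear_combination -hAB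
  -- identify the theorem's LHS with -∫ A
  have hLHS : (∫ x, ∑ i, ((rpderiv χ i x : ℝ) : ℂ) *
      (star (f x) * cpderiv f i x - f x * cpderiv (fun z => star (f z)) i x)) = ∫ x, A x := by
    apply integral_congr_ae
    apply Filter.Eventually.of_forall
    intro x
    rw [hA_def]
    simp only [conj_cpderiv f hdf]
    rfl
  -- identify ∫ B with the RHS
  have hRHS : ∫ x, B x = 2 * Complex.I * ((∫ x, (V x).im * ‖f x‖ ^ 2 * χ x : ℝ) : ℂ) := by
    rw [hB_def]
    rw [integral_const_mul]
    congr 1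
    exact integral_ofReal
  rw [hLHS, hABeq, hRHS]
end
end

section
/- Let n ≥ 1, let V : ℝⁿ → ℂ be continuous with Im(V(x)) ≥ 0 for all x, and let f : ℝⁿ → ℂ be a C² function such that f is square integrable on ℝⁿ, the gradient ∇f is square integrable on ℝⁿ, and -Δf + V·f = 0 on ℝⁿ. Then ∫_{ℝⁿ} Im(V(x))·|f(x)|² dx = 0, and consequently Im(V(x))·|f(x)|² = 0 for every x ∈ ℝⁿ. -/
set_option maxHeartbeats 1000000

noncomputable section

open MeasureTheory Complex Metric Set Bornology Filter

/-! ### Auxiliary lemmas -/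

lemma pi_norm_coord_le {m : ℕ} (i : Fin (m+1)) (t : ℝ) (x : Fin m → ℝ) :
    |t| ≤ ‖(Fin.insertNth (α := fun _ => ℝ) i t x)‖ := by
  have h := norm_le_pi_norm (G := fun _ : Fin (m+1) => ℝ) (Fin.insertNth i t x) i
  rwa [Fin.insertNth_apply_same, Real.norm_eq_abs] at h

lemma eucl_coord_le {n : ℕ} (y : EuclideanSpace ℂ (Fin n)) (i : Fin n) : ‖y i‖ ≤ ‖y‖ := by
  rw [EuclideanSpace.norm_eq]
  calc ‖y i‖ = Real.sqrt (‖y i‖^2) := (Real.sqrt_sq (norm_nonneg _)).symm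
    _ ≤ _ := Real.sqrt_le_sqrt (Finset.single_le_sum (f := fun j => ‖y j‖^2)
        (fun j _ => sq_nonneg _) (Finset.mem_univ i))

/-- Divergence theorem for compactly supported `C¹` vector fields on `ℝ^(m+1)` (pi version). -/
lemma div_thm_pi {m : ℕ} (F : Fin (m+1) → (Fin (m+1) → ℝ) → ℝ)
    (hF : ∀ i, ContDiff ℝ 1 (F i)) (hsupp : ∀ i, HasCompactSupport (F i)) :
    ∫ x, ∑ i, fderiv ℝ (F i) x (Pi.single i 1) = 0 := by
  have hbd : ∃ R : ℝ, 0 ≤ R ∧ ∀ i, tsupport (F i) ⊆ closedBall 0 R := by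
    have : IsBounded (⋃ i, tsupport (F i)) :=
      (isBounded_iUnion.2 (fun i => (hsupp i).isBounded))
    obtain ⟨R, hR⟩ := this.subset_closedBall 0
    exact ⟨max R 0, le_max_right _ _, fun i =>
      ((Set.subset_iUnion _ i).trans hR).trans (closedBall_subset_closedBall (le_max_left _ _))⟩
  obtain ⟨R, hR0, hR⟩ := hbd
  set a : Fin (m+1) → ℝ := fun _ => -(R+1) with ha
  set b : Fin (m+1) → ℝ := fun _ => (R+1) with hb
  have hle : a ≤ b := fun i => by simp only [ha, hb]; linarith
  have hzero : ∀ (i : Fin (m+1)) (x : Fin (m+1) → ℝ), R < ‖x‖ → F i x = 0 := fun i x hx =>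
    image_eq_zero_of_notMem_tsupport (fun hmem => by
      have := hR i hmem; simp only [mem_closedBall, dist_zero_right] at this; linarith)
  have hdzero : ∀ (i : Fin (m+1)) (x : Fin (m+1) → ℝ), R < ‖x‖ → fderiv ℝ (F i) x = 0 := by
    intro i x hx
    by_contra h
    have : x ∈ Function.support (fderiv ℝ (F i)) := h
    have := hR i (support_fderiv_subset ℝ this)
    simp only [mem_closedBall, dist_zero_right] at this; linarith
  have key := MeasureTheory.integral_divergence_of_hasFDerivAt_off_countable' a b hle
    F (fun i x => fderiv ℝ (F i) x) ∅ Set.countable_empty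
    (fun i => ((hF i).continuous).continuousOn)
    (fun x _ i => ((hF i).differentiable one_ne_zero x).hasFDerivAt)
    (by
      apply ContinuousOn.integrableOn_compact isCompact_Icc
      apply Continuous.continuousOn
      apply continuous_finset_sum
      intro i _
      exact ((hF i).continuous_fderiv one_ne_zero).clm_apply continuous_const)
  have hface : ∀ i : Fin (m+1),
      ((∫ x in Icc (a ∘ i.succAbove) (b ∘ i.succAbove), F i (i.insertNth (b i) x)) -
       ∫ x in Icc (a ∘ i.succAbove) (b ∘ i.succAbove), F i (i.insertNth (a i) x)) = 0 := by
    intro i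
    have h1 : ∀ x : Fin m → ℝ, F i (i.insertNth (b i) x) = 0 := by
      intro x
      refine hzero i _ (lt_of_lt_of_le ?_ (pi_norm_coord_le i (b i) x))
      simp only [hb]; rw [_root_.abs_of_nonneg (by linarith)]; linarith
    have h2 : ∀ x : Fin m → ℝ, F i (i.insertNth (a i) x) = 0 := by
      intro x
      refine hzero i _ (lt_of_lt_of_le ?_ (pi_norm_coord_le i (a i) x))
      simp only [ha]; rw [_root_.abs_of_nonpos (by linarith)]; linarith
    simp [h1, h2]
  rw [Finset.sum_eq_zero (fun i _ => hface i)] at key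
  rw [← key]
  symm
  apply setIntegral_eq_integral_of_forall_compl_eq_zero
  intro x hx
  have hxR : R < ‖x‖ := by
    simp only [Set.mem_Icc, not_and_or, Pi.le_def, not_forall, not_le] at hx
    rcases hx with h | h
    · obtain ⟨j, hj⟩ := h
      have h1 : R < |x j| := by
        simp only [ha] at hj; rw [_root_.abs_of_nonpos (by linarith)]; linarith
      exact lt_of_lt_of_le h1 (by simpa [Real.norm_eq_abs] using norm_le_pi_norm x j)
    · obtain ⟨j, hj⟩ := h
      have h1 : R < |x j| := by
        simp only [hb] at hj; rw [_root_.abs_of_nonneg (by linarith)]; linarith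
      exact lt_of_lt_of_le h1 (by simpa [Real.norm_eq_abs] using norm_le_pi_norm x j)
  apply Finset.sum_eq_zero
  intro i _
  show (fderiv ℝ (F i) x) (Pi.single i 1) = 0
  rw [hdzero i x hxR]
  rfl

/-- Divergence theorem for compactly supported `C¹` vector fields on Euclidean space. -/
lemma div_thm_euclidean {n : ℕ} (hn : 1 ≤ n)
    (F : Fin n → EuclideanSpace ℝ (Fin n) → ℝ)
    (hF : ∀ i, ContDiff ℝ 1 (F i)) (hsupp : ∀ i, HasCompactSupport (F i)) :
    ∫ x, ∑ i, fderiv ℝ (F i) x (EuclideanSpace.single i 1) = 0 := by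
  obtain ⟨m, rfl⟩ : ∃ m, n = m + 1 := ⟨n - 1, (Nat.succ_pred_eq_of_pos hn).symm⟩
  clear hn
  set e : EuclideanSpace ℝ (Fin (m+1)) ≃L[ℝ] (Fin (m+1) → ℝ) :=
    EuclideanSpace.equiv (Fin (m+1)) ℝ with he
  set G : Fin (m+1) → (Fin (m+1) → ℝ) → ℝ := fun i y => F i (e.symm y) with hG
  have hGc : ∀ i, ContDiff ℝ 1 (G i) := fun i => (hF i).comp e.symm.contDiff
  have hGs : ∀ i, HasCompactSupport (G i) := fun i =>
    (hsupp i).comp_homeomorph e.symm.toHomeomorph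
  have hfd : ∀ i y, fderiv ℝ (G i) y (Pi.single i 1) =
      fderiv ℝ (F i) (e.symm y) (EuclideanSpace.single i 1) := by
    intro i y
    have hdiff : DifferentiableAt ℝ (F i) (e.symm y) := ((hF i).differentiable one_ne_zero) _
    have : fderiv ℝ (G i) y = (fderiv ℝ (F i) (e.symm y)).comp (e.symm : (Fin (m+1) → ℝ) →L[ℝ] _) := by
      rw [hG]
      exact (hdiff.hasFDerivAt.comp y e.symm.toContinuousLinearMap.hasFDerivAt).fderiv
    rw [this]
    rfl
  have hmp := (EuclideanSpace.volume_preserving_symm_measurableEquiv_toLp (Fin (m+1))).symm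
  have hint := hmp.integral_comp (MeasurableEquiv.toLp 2 (Fin (m+1) → ℝ)).measurableEmbedding
    (fun x => ∑ i, fderiv ℝ (F i) x (EuclideanSpace.single i 1))
  rw [← hint]
  have hcoe : ∀ y : Fin (m+1) → ℝ, (MeasurableEquiv.toLp 2 (Fin (m+1) → ℝ)) y = e.symm y :=
    fun _ => rfl
  calc (∫ y : Fin (m+1) → ℝ, ∑ i, fderiv ℝ (F i) ((MeasurableEquiv.toLp 2 (Fin (m+1) → ℝ)) y)
          (EuclideanSpace.single i 1))
      = ∫ y : Fin (m+1) → ℝ, ∑ i, fderiv ℝ (G i) y (Pi.single i 1) := by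
        congr 1; funext y; rw [hcoe]; exact (Finset.sum_congr rfl (fun i _ => (hfd i y).symm))
    _ = 0 := div_thm_pi G hGc hGs

lemma contDiff_cpderiv {n : ℕ} {f : EuclideanSpace ℝ (Fin n) → ℂ} (hf : ContDiff ℝ 2 f)
    (i : Fin n) : ContDiff ℝ 1 (cpderiv f i) := by
  have h1 : ContDiff ℝ 1 (fderiv ℝ f) := hf.fderiv_right (by norm_num)
  exact h1.clm_apply contDiff_const

lemma contDiff_conj_comp {n : ℕ} {f : EuclideanSpace ℝ (Fin n) → ℂ} (hf : ContDiff ℝ 1 f) :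
    ContDiff ℝ 1 (fun x => (starRingEnd ℂ) (f x)) :=
  Complex.conjCLE.contDiff.comp hf

lemma contDiff_Jr {n : ℕ} {f : EuclideanSpace ℝ (Fin n) → ℂ} (hf : ContDiff ℝ 2 f) (i : Fin n) :
    ContDiff ℝ 1 (fun x => ((starRingEnd ℂ) (f x) * cpderiv f i x).im) :=
  Complex.imCLM.contDiff.comp
    ((contDiff_conj_comp (hf.of_le one_le_two)).mul (contDiff_cpderiv hf i))

lemma fderiv_conj_comp {n : ℕ} {f : EuclideanSpace ℝ (Fin n) → ℂ}
    {x : EuclideanSpace ℝ (Fin n)} (hf : DifferentiableAt ℝ f x) (v : EuclideanSpace ℝ (Fin n)) :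
    fderiv ℝ (fun y => (starRingEnd ℂ) (f y)) x v = (starRingEnd ℂ) (fderiv ℝ f x v) := by
  have h := (Complex.conjCLE.toContinuousLinearMap.hasFDerivAt.comp x hf.hasFDerivAt).fderiv
  have h2 : (fun y => (starRingEnd ℂ) (f y)) = (⇑Complex.conjCLE.toContinuousLinearMap) ∘ f := by
    funext y; simp [Complex.conjCLE_apply]
  rw [h2, h]
  rfl

lemma fderiv_im_comp {n : ℕ} {g : EuclideanSpace ℝ (Fin n) → ℂ} {x : EuclideanSpace ℝ (Fin n)}
    (hg : DifferentiableAt ℝ g x) (v : EuclideanSpace ℝ (Fin n)) :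
    fderiv ℝ (fun y => (g y).im) x v = (fderiv ℝ g x v).im := by
  have h := (Complex.imCLM.hasFDerivAt.comp x hg.hasFDerivAt).fderiv
  have h2 : (fun y => (g y).im) = (⇑Complex.imCLM) ∘ g := rfl
  rw [h2, h]
  rfl

/-- The key pointwise computation: the divergence of `φ · Im(conj f ∇f)`. -/
lemma sum_fderiv_eq {n : ℕ} (V f : EuclideanSpace ℝ (Fin n) → ℂ)
    (hf : ContDiff ℝ 2 f)
    (heq : ∀ x, -claplacian f x + V x * f x = 0)
    (φ : EuclideanSpace ℝ (Fin n) → ℝ) (hφ : ContDiff ℝ 1 φ)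
    (x : EuclideanSpace ℝ (Fin n)) :
    ∑ i, fderiv ℝ (fun y => φ y * ((starRingEnd ℂ) (f y) * cpderiv f i y).im) x
        (EuclideanSpace.single i 1)
    = (∑ i, fderiv ℝ φ x (EuclideanSpace.single i 1) *
          ((starRingEnd ℂ) (f x) * cpderiv f i x).im)
      + φ x * ((V x).im * ‖f x‖^2) := by
  have hdf : Differentiable ℝ f := hf.differentiable two_ne_zero
  have hdconj : DifferentiableAt ℝ (fun y => (starRingEnd ℂ) (f y)) x :=
    ((contDiff_conj_comp (hf.of_le one_le_two)).differentiable one_ne_zero) x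
  have hdcp : ∀ i, DifferentiableAt ℝ (cpderiv f i) x := fun i =>
    ((contDiff_cpderiv hf i).differentiable one_ne_zero) x
  have hdg : ∀ i, DifferentiableAt ℝ (fun y => (starRingEnd ℂ) (f y) * cpderiv f i y) x :=
    fun i => hdconj.mul (hdcp i)
  have hdJ : ∀ i, DifferentiableAt ℝ (fun y => ((starRingEnd ℂ) (f y) * cpderiv f i y).im) x :=
    fun i => ((contDiff_Jr hf i).differentiable one_ne_zero) x
  have hdφ : DifferentiableAt ℝ φ x := (hφ.differentiable one_ne_zero) x
  have hstep : ∀ i, fderiv ℝ (fun y => φ y * ((starRingEnd ℂ) (f y) * cpderiv f i y).im) x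
        (EuclideanSpace.single i 1)
      = fderiv ℝ φ x (EuclideanSpace.single i 1) * ((starRingEnd ℂ) (f x) * cpderiv f i x).im
        + φ x * ((starRingEnd ℂ) (f x) * cpderiv (cpderiv f i) i x).im := by
    intro i
    rw [fderiv_fun_mul hdφ (hdJ i)]
    simp only [ContinuousLinearMap.add_apply, ContinuousLinearMap.coe_smul', Pi.smul_apply,
      smul_eq_mul]
    have hJ : fderiv ℝ (fun y => ((starRingEnd ℂ) (f y) * cpderiv f i y).im) x
        (EuclideanSpace.single i 1)
        = ((starRingEnd ℂ) (f x) * cpderiv (cpderiv f i) i x).im := by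
      rw [fderiv_im_comp (hdg i)]
      rw [fderiv_fun_mul hdconj (hdcp i)]
      simp only [ContinuousLinearMap.add_apply, ContinuousLinearMap.coe_smul', Pi.smul_apply,
        smul_eq_mul]
      have h1 : fderiv ℝ (fun y => (starRingEnd ℂ) (f y)) x (EuclideanSpace.single i 1)
          = (starRingEnd ℂ) (cpderiv f i x) := fderiv_conj_comp (hdf x) _
      have h2 : fderiv ℝ (cpderiv f i) x (EuclideanSpace.single i 1)
          = cpderiv (cpderiv f i) i x := rfl
      rw [h1, h2]
      have : cpderiv f i x * (starRingEnd ℂ) (cpderiv f i x)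
          = ((Complex.normSq (cpderiv f i x) : ℝ) : ℂ) := Complex.mul_conj _
      rw [add_im, this]
      simp
    rw [hJ]
    ring
  rw [Finset.sum_congr rfl (fun i _ => hstep i), Finset.sum_add_distrib]
  congr 1
  rw [← Finset.mul_sum]
  congr 1
  have hsum : ∑ i, ((starRingEnd ℂ) (f x) * cpderiv (cpderiv f i) i x).im
      = ((starRingEnd ℂ) (f x) * claplacian f x).im := by
    rw [claplacian, Finset.mul_sum, Complex.im_sum]
  rw [hsum]
  have hlap : claplacian f x = V x * f x := by linear_combination -heq x
  rw [hlap]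
  have : (starRingEnd ℂ) (f x) * (V x * f x) = V x * ((Complex.normSq (f x) : ℝ) : ℂ) := by
    rw [← Complex.mul_conj (f x)]; ring
  rw [this]
  simp only [Complex.mul_im, Complex.ofReal_re, Complex.ofReal_im, mul_zero, add_zero, zero_add,
    zero_mul]
  congr 1
  rw [Complex.normSq_eq_norm_sq]

/-- For a signed potential (`Im V ≥ 0`) and an admissible kernel element `f` of `−Δ + V`,
the integral `∫ Im(V) |f|²` vanishes, and hence the integrand vanishes identically. -/
theorem integral_im_V_eq_zero {n : ℕ} (hn : 1 ≤ n)
    (V f : EuclideanSpace ℝ (Fin n) → ℂ)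
    (hV : Continuous V) (hVim : ∀ x, 0 ≤ (V x).im)
    (hf : ContDiff ℝ 2 f)
    (hfL2 : MemLp f 2 (volume : Measure (EuclideanSpace ℝ (Fin n))))
    (hgradL2 : MemLp (fun x => cgrad f x) 2 (volume : Measure (EuclideanSpace ℝ (Fin n))))
    (heq : ∀ x, -claplacian f x + V x * f x = 0) :
    (∫ x, (V x).im * ‖f x‖ ^ 2) = 0 ∧ ∀ x, (V x).im * ‖f x‖ ^ 2 = 0 := by
  classical
  have hfc : Continuous f := hf.continuous
  have hcpc : ∀ i, Continuous (cpderiv f i) := fun i => (contDiff_cpderiv hf i).continuous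
  set ρ : EuclideanSpace ℝ (Fin n) → ℝ := fun x => (V x).im * ‖f x‖^2 with hρdef
  have hρc : Continuous ρ := (Complex.continuous_im.comp hV).mul ((hfc.norm).pow 2)
  have hρ0 : ∀ x, 0 ≤ ρ x := fun x => mul_nonneg (hVim x) (sq_nonneg _)
  suffices hzero : ∀ x, ρ x = 0 by
    refine ⟨?_, hzero⟩
    calc (∫ x, (V x).im * ‖f x‖ ^ 2)
        = ∫ _x : EuclideanSpace ℝ (Fin n), (0:ℝ) :=
          integral_congr_ae (Filter.Eventually.of_forall fun x => hzero x)
      _ = 0 := integral_zero _ _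
  -- the cutoff functions
  set c : ContDiffBump (0 : EuclideanSpace ℝ (Fin n)) := ⟨1, 2, one_pos, one_lt_two⟩ with hcdef
  set χ : ℕ → EuclideanSpace ℝ (Fin n) → ℝ := fun k x => c (((k:ℝ)+1)⁻¹ • x) with hχdef
  have hkpos : ∀ k : ℕ, (0:ℝ) < (k:ℝ)+1 := fun k => by positivity
  have hχsm : ∀ k, ContDiff ℝ 1 (χ k) := fun k =>
    (c.contDiff (n := 1)).comp (contDiff_const_smul _)
  have hχ1 : ∀ (k : ℕ) x, ‖x‖ ≤ (k:ℝ)+1 → χ k x = 1 := by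
    intro k x hx
    apply c.one_of_mem_closedBall
    simp only [mem_closedBall, dist_zero_right, norm_smul, norm_inv, Real.norm_eq_abs,
      _root_.abs_of_pos (hkpos k)]
    rw [inv_mul_le_iff₀ (hkpos k)]
    simpa [hcdef] using hx
  have hχ0 : ∀ (k : ℕ) x, 2*((k:ℝ)+1) ≤ ‖x‖ → χ k x = 0 := by
    intro k x hx
    apply c.zero_of_le_dist
    simp only [dist_zero_right, norm_smul, norm_inv, Real.norm_eq_abs, _root_.abs_of_pos (hkpos k)]
    show (2:ℝ) ≤ ((k:ℝ)+1)⁻¹ * ‖x‖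
    calc (2:ℝ) = ((k:ℝ)+1)⁻¹ * (2*((k:ℝ)+1)) := by
          field_simp
      _ ≤ ((k:ℝ)+1)⁻¹ * ‖x‖ := by
          apply mul_le_mul_of_nonneg_left hx (by positivity)
  have hχnn : ∀ (k : ℕ) x, 0 ≤ χ k x := fun k x => c.nonneg
  have hχle : ∀ (k : ℕ) x, χ k x ≤ 1 := fun k x => c.le_one
  have hχsupp : ∀ k, HasCompactSupport (χ k) := fun k =>
    HasCompactSupport.intro (isCompact_closedBall (0 : EuclideanSpace ℝ (Fin n)) (2*((k:ℝ)+1)))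
      (fun x hx => hχ0 k x (by
        simp only [mem_closedBall, dist_zero_right, not_le] at hx; linarith))
  -- bound on the derivative of the bump function
  obtain ⟨M, hM⟩ := Continuous.bounded_above_of_compact_support
    ((c.contDiff (n := 1)).continuous_fderiv (by norm_num))
    (c.hasCompactSupport.fderiv ℝ)
  have hM0 : (0:ℝ) ≤ M := (norm_nonneg _).trans (hM 0)
  have hχfd : ∀ (k : ℕ) x, fderiv ℝ (χ k) x = (fderiv ℝ (⇑c) (((k:ℝ)+1)⁻¹ • x)).comp
      ((((k:ℝ)+1)⁻¹ : ℝ) • ContinuousLinearMap.id ℝ (EuclideanSpace ℝ (Fin n))) := by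
    intro k x
    have hL : HasFDerivAt (fun y : EuclideanSpace ℝ (Fin n) => ((k:ℝ)+1)⁻¹ • y)
        ((((k:ℝ)+1)⁻¹ : ℝ) • ContinuousLinearMap.id ℝ (EuclideanSpace ℝ (Fin n))) x := by
      exact (hasFDerivAt_id (𝕜 := ℝ) x).const_smul (((k:ℝ)+1)⁻¹)
    exact ((((c.contDiff (n := 1)).differentiable (by norm_num)
      _).hasFDerivAt).comp x hL).fderiv
  have hχfdb : ∀ (k : ℕ) x, ‖fderiv ℝ (χ k) x‖ ≤ M := by
    intro k x
    rw [hχfd]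
    set D := fderiv ℝ (⇑c) (((k:ℝ)+1)⁻¹ • x) with hD
    set L := (((k:ℝ)+1)⁻¹ : ℝ) • ContinuousLinearMap.id ℝ (EuclideanSpace ℝ (Fin n)) with hLd
    have h1 : ‖D.comp L‖ ≤ ‖D‖ * ‖L‖ := ContinuousLinearMap.opNorm_comp_le _ _
    have h2 : ‖L‖ ≤ 1 := by
      have h3 : ‖L‖ ≤ ‖(((k:ℝ)+1)⁻¹ : ℝ)‖ * ‖ContinuousLinearMap.id ℝ (EuclideanSpace ℝ (Fin n))‖ := by
        rw [hLd]
        exact norm_smul_le (((k:ℝ)+1)⁻¹ : ℝ) (ContinuousLinearMap.id ℝ (EuclideanSpace ℝ (Fin n)))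
      have h4 : ‖ContinuousLinearMap.id ℝ (EuclideanSpace ℝ (Fin n))‖ ≤ 1 :=
        ContinuousLinearMap.norm_id_le
      have h5 : ‖(((k:ℝ)+1)⁻¹ : ℝ)‖ ≤ 1 := by
        rw [Real.norm_eq_abs, _root_.abs_of_pos (by positivity)]
        have hk1 : (1:ℝ) ≤ (k:ℝ)+1 := by linarith [Nat.cast_nonneg (α := ℝ) k]
        calc ((k:ℝ)+1)⁻¹ ≤ 1⁻¹ := by
              apply inv_anti₀ one_pos hk1
          _ = 1 := inv_one
      nlinarith [norm_nonneg L, norm_nonneg (((k:ℝ)+1)⁻¹ : ℝ),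
        norm_nonneg (ContinuousLinearMap.id ℝ (EuclideanSpace ℝ (Fin n)))]
    have h6 : ‖D‖ ≤ M := hM _
    nlinarith [norm_nonneg D, norm_nonneg (D.comp L)]
  have hχfd0 : ∀ (x : EuclideanSpace ℝ (Fin n)) (k : ℕ), ‖x‖ < (k:ℝ)+1 →
      fderiv ℝ (χ k) x = 0 := by
    intro x k hk
    have hmem : Metric.ball (0 : EuclideanSpace ℝ (Fin n)) ((k:ℝ)+1) ∈ nhds x :=
      Metric.isOpen_ball.mem_nhds (by simpa [mem_ball, dist_zero_right] using hk)
    have hev : χ k =ᶠ[nhds x] (fun _ => (1:ℝ)) := by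
      filter_upwards [hmem] with y hy
      exact hχ1 k y (le_of_lt (by simpa [mem_ball, dist_zero_right] using hy))
    rw [hev.fderiv_eq, fderiv_fun_const]
    rfl
  -- the field and its divergence pieces
  set Jr : Fin n → EuclideanSpace ℝ (Fin n) → ℝ :=
    fun i x => ((starRingEnd ℂ) (f x) * cpderiv f i x).im with hJrdef
  have hJrc : ∀ i, Continuous (Jr i) := fun i => (contDiff_Jr hf i).continuous
  have hJrb : ∀ i x, |Jr i x| ≤ ‖f x‖ * ‖cpderiv f i x‖ := by
    intro i x
    calc |Jr i x| ≤ ‖(starRingEnd ℂ) (f x) * cpderiv f i x‖ := by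
          exact Complex.abs_im_le_norm _
      _ = ‖f x‖ * ‖cpderiv f i x‖ := by rw [norm_mul, RCLike.norm_conj]
  set ψ : ℕ → EuclideanSpace ℝ (Fin n) → ℝ := fun k x => χ k x * χ k x with hψdef
  have hψsm : ∀ k, ContDiff ℝ 1 (ψ k) := fun k => (hχsm k).mul (hχsm k)
  have hψsupp : ∀ k, HasCompactSupport (ψ k) := fun k => (hχsupp k).mul_right
  have hψfd : ∀ (k : ℕ) x (v : EuclideanSpace ℝ (Fin n)),
      fderiv ℝ (ψ k) x v = 2 * χ k x * fderiv ℝ (χ k) x v := by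
    intro k x v
    rw [hψdef]
    rw [fderiv_fun_mul ((hχsm k).differentiable one_ne_zero x) ((hχsm k).differentiable one_ne_zero x)]
    simp only [ContinuousLinearMap.add_apply, ContinuousLinearMap.coe_smul', Pi.smul_apply,
      smul_eq_mul]
    ring
  have hψfdb : ∀ (k : ℕ) x (i : Fin n),
      |fderiv ℝ (ψ k) x (EuclideanSpace.single i 1)| ≤ 2*M := by
    intro k x i
    rw [hψfd]
    have h1 : |fderiv ℝ (χ k) x (EuclideanSpace.single i 1)| ≤ M := by
      calc |fderiv ℝ (χ k) x (EuclideanSpace.single i 1)|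
          ≤ ‖fderiv ℝ (χ k) x‖ * ‖EuclideanSpace.single i (1:ℝ)‖ :=
            (fderiv ℝ (χ k) x).le_opNorm _
        _ = ‖fderiv ℝ (χ k) x‖ := by rw [EuclideanSpace.norm_single]; simp
        _ ≤ M := hχfdb k x
    calc |2 * χ k x * fderiv ℝ (χ k) x (EuclideanSpace.single i 1)|
        = 2 * χ k x * |fderiv ℝ (χ k) x (EuclideanSpace.single i 1)| := by
          rw [abs_mul, _root_.abs_of_nonneg (show (0:ℝ) ≤ 2 * χ k x by
            have := hχnn k x; positivity)]
      _ ≤ 2 * 1 * M := by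
          apply mul_le_mul ?_ h1 (abs_nonneg _) (by norm_num)
          have := hχle k x; have := hχnn k x; nlinarith
      _ = 2*M := by ring
  set A : ℕ → EuclideanSpace ℝ (Fin n) → ℝ :=
    fun k x => ∑ i, fderiv ℝ (ψ k) x (EuclideanSpace.single i 1) * Jr i x with hAdef
  set B : ℕ → EuclideanSpace ℝ (Fin n) → ℝ := fun k x => ψ k x * ρ x with hBdef
  have hAcont : ∀ k, Continuous (A k) := by
    intro k
    apply continuous_finset_sum
    intro i _
    exact (((hψsm k).continuous_fderiv one_ne_zero).clm_apply continuous_const).mul (hJrc i)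
  have hBcont : ∀ k, Continuous (B k) := fun k => ((hψsm k).continuous.mul hρc)
  have hAsupp : ∀ k, HasCompactSupport (A k) := by
    intro k
    apply HasCompactSupport.intro (hψsupp k)
    intro x hx
    have hfd0 : fderiv ℝ (ψ k) x = 0 := by
      by_contra h
      exact hx (support_fderiv_subset ℝ (h : x ∈ Function.support (fderiv ℝ (ψ k))))
    rw [hAdef]
    simp [hfd0]
  have hBsupp : ∀ k, HasCompactSupport (B k) := fun k => (hψsupp k).mul_right
  have hAint : ∀ k, Integrable (A k) := fun k =>
    (hAcont k).integrable_of_hasCompactSupport (hAsupp k)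
  have hBint : ∀ k, Integrable (B k) := fun k =>
    (hBcont k).integrable_of_hasCompactSupport (hBsupp k)
  -- divergence identity
  have hdiv : ∀ k, (∫ x, (A k x + B k x)) = 0 := by
    intro k
    have h1 := div_thm_euclidean hn (fun i x => ψ k x * Jr i x)
      (fun i => (hψsm k).mul (contDiff_Jr hf i))
      (fun i => (hψsupp k).mul_right)
    rw [← h1]
    refine integral_congr_ae (Filter.Eventually.of_forall fun x => ?_)
    exact (sum_fderiv_eq V f hf heq (ψ k) (hψsm k) x).symm
  have hIB : ∀ k, (∫ x, B k x) = - ∫ x, A k x := by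
    intro k
    have h := hdiv k
    rw [integral_add (hAint k) (hBint k)] at h
    linarith
  -- dominating function
  set g : EuclideanSpace ℝ (Fin n) → ℝ :=
    fun x => ∑ i, (2*M) * (‖f x‖ * ‖cpderiv f i x‖) with hgdef
  have hgint : Integrable g := by
    apply integrable_finset_sum
    intro i _
    apply Integrable.const_mul
    have h2f : MemLp (fun x => ‖f x‖) 2 (volume : Measure (EuclideanSpace ℝ (Fin n))) := hfL2.norm
    have hcp2 : MemLp (cpderiv f i) 2 (volume : Measure (EuclideanSpace ℝ (Fin n))) := by
      apply hgradL2.of_le ((hcpc i).aestronglyMeasurable)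
      apply Filter.Eventually.of_forall
      intro x
      exact eucl_coord_le (cgrad f x) i
    have hmul : MemLp ((fun x => ‖f x‖) • (fun x => ‖cpderiv f i x‖)) 1
        (volume : Measure (EuclideanSpace ℝ (Fin n))) := by
      exact MemLp.smul hcp2.norm h2f
    rw [memLp_one_iff_integrable] at hmul
    exact hmul
  have hAbound : ∀ (k : ℕ) x, ‖A k x‖ ≤ g x := by
    intro k x
    rw [hAdef, hgdef]
    calc ‖∑ i, fderiv ℝ (ψ k) x (EuclideanSpace.single i 1) * Jr i x‖
        ≤ ∑ i, ‖fderiv ℝ (ψ k) x (EuclideanSpace.single i 1) * Jr i x‖ := norm_sum_le _ _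
      _ ≤ ∑ i, (2*M) * (‖f x‖ * ‖cpderiv f i x‖) := by
          apply Finset.sum_le_sum
          intro i _
          rw [Real.norm_eq_abs, abs_mul]
          apply mul_le_mul (hψfdb k x i) (hJrb i x) (abs_nonneg _) (by positivity)
  -- A tends to zero pointwise
  have hAtend : ∀ x, Filter.Tendsto (fun k => A k x) atTop (nhds 0) := by
    intro x
    apply tendsto_const_nhds.congr'
    obtain ⟨k₀, hk₀⟩ := exists_nat_gt ‖x‖
    filter_upwards [Filter.eventually_ge_atTop k₀] with k hk
    have hfd0 : fderiv ℝ (χ k) x = 0 := by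
      apply hχfd0 x k
      have : (k₀:ℝ) ≤ (k:ℝ) := by exact_mod_cast hk
      linarith
    rw [hAdef]
    symm
    apply Finset.sum_eq_zero
    intro i _
    rw [hψfd, hfd0]
    simp
  have hItend : Filter.Tendsto (fun k => ∫ x, A k x) atTop (nhds 0) := by
    have h := MeasureTheory.tendsto_integral_of_dominated_convergence g
      (fun k => (hAcont k).aestronglyMeasurable) hgint
      (fun k => Filter.Eventually.of_forall (fun x => hAbound k x))
      (Filter.Eventually.of_forall hAtend)
    simpa using h
  have hBtendI : Filter.Tendsto (fun k => ∫ x, B k x) atTop (nhds 0) := by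
    have : (fun k => ∫ x, B k x) = fun k => - ∫ x, A k x := funext hIB
    rw [this]
    simpa using hItend.neg
  -- Fatou argument
  have hB0 : ∀ (k : ℕ) x, 0 ≤ B k x := fun k x =>
    mul_nonneg (mul_nonneg (hχnn k x) (hχnn k x)) (hρ0 x)
  have hmeasB : ∀ k, Measurable (fun x => ENNReal.ofReal (B k x)) := fun k =>
    ENNReal.measurable_ofReal.comp (hBcont k).measurable
  have hliminfpt : ∀ x, Filter.liminf (fun k => ENNReal.ofReal (B k x)) atTop
      = ENNReal.ofReal (ρ x) := by
    intro x
    apply Filter.Tendsto.liminf_eq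
    apply tendsto_const_nhds.congr'
    obtain ⟨k₀, hk₀⟩ := exists_nat_gt ‖x‖
    filter_upwards [Filter.eventually_ge_atTop k₀] with k hk
    have hx1 : χ k x = 1 := by
      apply hχ1
      have : (k₀:ℝ) ≤ (k:ℝ) := by exact_mod_cast hk
      linarith
    rw [hBdef]
    show ENNReal.ofReal (ρ x) = ENNReal.ofReal (ψ k x * ρ x)
    rw [hψdef]
    show ENNReal.ofReal (ρ x) = ENNReal.ofReal (χ k x * χ k x * ρ x)
    rw [hx1]
    ring_nf
  have hkey : (∫⁻ x, ENNReal.ofReal (ρ x)) = 0 := by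
    apply le_antisymm ?_ zero_le
    calc (∫⁻ x, ENNReal.ofReal (ρ x))
        = ∫⁻ x, Filter.liminf (fun k => ENNReal.ofReal (B k x)) atTop :=
          lintegral_congr (fun x => (hliminfpt x).symm)
      _ ≤ Filter.liminf (fun k => ∫⁻ x, ENNReal.ofReal (B k x)) atTop :=
          lintegral_liminf_le hmeasB
      _ = Filter.liminf (fun k => ENNReal.ofReal (∫ x, B k x)) atTop := by
          have heqk : ∀ k : ℕ, (∫⁻ x, ENNReal.ofReal (B k x))
              = ENNReal.ofReal (∫ x, B k x) := fun k =>
            (ofReal_integral_eq_lintegral_ofReal (hBint k)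
              (Filter.Eventually.of_forall (hB0 k))).symm
          simp only [heqk]
      _ = 0 := by
          have : Filter.Tendsto (fun k => ENNReal.ofReal (∫ x, B k x)) atTop (nhds 0) := by
            simpa using (ENNReal.tendsto_ofReal hBtendI)
          exact this.liminf_eq
  have haezero : ∀ᵐ x ∂(volume : Measure (EuclideanSpace ℝ (Fin n))), ρ x = 0 := by
    have h := (lintegral_eq_zero_iff (ENNReal.measurable_ofReal.comp hρc.measurable)).mp hkey
    filter_upwards [h] with x hx
    have : ENNReal.ofReal (ρ x) = 0 := hx
    rw [ENNReal.ofReal_eq_zero] at this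
    linarith [hρ0 x]
  have hfin : ρ = fun _ => 0 :=
    (Continuous.ae_eq_iff_eq volume hρc continuous_const).mp haezero
  exact fun x => congrFun hfin x
end
end

section
/- Let n ≥ 1 and let V : ℝⁿ → ℂ be continuous with Im(V(x)) ≥ 0 for all x ∈ ℝⁿ and Im(V) not identically zero. Suppose f : ℝⁿ → ℂ is a C² function such that f is square integrable on ℝⁿ, the gradient ∇f is square integrable on ℝⁿ, and -Δf + V·f = 0 on ℝⁿ. Then there exists a point x ∈ ℝⁿ with f(x) = 0. -/
noncomputable section

open MeasureTheory Complex

/-! ### Auxiliary lemmas -/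

section Aux

open Set Function

lemma div_thm_pi_s6 {m : ℕ} (G : Fin (m+1) → (Fin (m+1) → ℝ) → ℝ)
    (G' : Fin (m+1) → (Fin (m+1) → ℝ) → ((Fin (m+1) → ℝ) →L[ℝ] ℝ))
    (hGc : ∀ i, Continuous (G i))
    (hGd : ∀ i x, HasFDerivAt (G i) (G' i x) x)
    (hsupp : ∀ i, HasCompactSupport (G i))
    (hint : Integrable (fun x => ∑ i, G' i x (Pi.single i 1))) :
    ∫ x, ∑ i, G' i x (Pi.single i 1) = 0 := by
  have hK : IsCompact (⋃ i, tsupport (G i)) := isCompact_iUnion (fun i => hsupp i)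
  obtain ⟨R, hR0, hRK⟩ : ∃ R, 0 < R ∧ (⋃ i, tsupport (G i)) ⊆ Metric.ball 0 R := by
    obtain ⟨R, hR⟩ := hK.isBounded.subset_ball 0
    exact ⟨max R 1, lt_of_lt_of_le one_pos (le_max_right _ _),
      hR.trans (Metric.ball_subset_ball (le_max_left _ _))⟩
  have hGz : ∀ i x, x ∉ Metric.ball (0 : Fin (m+1) → ℝ) R → G i x = 0 := by
    intro i x hx
    exact image_eq_zero_of_notMem_tsupport (fun h => hx (hRK (mem_iUnion.2 ⟨i, h⟩)))
  have hz : ∀ i x, x ∉ Metric.ball (0 : Fin (m+1) → ℝ) R → G' i x = 0 := by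
    intro i x hx
    have hxt : x ∉ tsupport (G i) := fun h => hx (hRK (mem_iUnion.2 ⟨i, h⟩))
    have h0 : G i =ᶠ[nhds x] (fun _ => 0) := by
      have : IsOpen (tsupport (G i))ᶜ := (isClosed_tsupport _).isOpen_compl
      filter_upwards [this.mem_nhds hxt] with y hy
      exact image_eq_zero_of_notMem_tsupport hy
    exact ((hGd i x).congr_of_eventuallyEq h0.symm).unique (hasFDerivAt_const 0 x) ▸ rfl
  set a : Fin (m+1) → ℝ := fun _ => -R with ha
  set b : Fin (m+1) → ℝ := fun _ => R with hb
  have hle : a ≤ b := fun i => by simp only [ha, hb]; linarith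
  have hball : Metric.ball (0 : Fin (m+1) → ℝ) R ⊆ Icc a b := by
    intro x hx
    simp only [Metric.mem_ball, dist_zero_right] at hx
    have h : ∀ i, |x i| < R := fun i => lt_of_le_of_lt (norm_le_pi_norm x i) hx
    exact ⟨fun i => (abs_lt.1 (h i)).1.le, fun i => (abs_lt.1 (h i)).2.le⟩
  have key := MeasureTheory.integral_divergence_of_hasFDerivAt_off_countable' a b hle
    G G' ∅ countable_empty (fun i => (hGc i).continuousOn)
    (fun x _ i => hGd i x) hint.integrableOn
  have hL : (∫ x in Icc a b, ∑ i, G' i x (Pi.single i 1)) = ∫ x, ∑ i, G' i x (Pi.single i 1) := by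
    apply setIntegral_eq_integral_of_forall_compl_eq_zero
    intro x hx
    have hxb : x ∉ Metric.ball (0 : Fin (m+1) → ℝ) R := fun h => hx (hball h)
    simp [hz _ _ hxb]
  have hface : ∀ (i : Fin (m+1)) (c : ℝ), |c| = R →
      ∀ y : Fin m → ℝ, G i (i.insertNth c y) = 0 := by
    intro i c hc y
    apply hGz
    simp only [Metric.mem_ball, dist_zero_right, not_lt]
    set z : Fin (m+1) → ℝ := i.insertNth c y with hzdef
    have hzi : z i = c := by
      rw [hzdef]; exact Fin.insertNth_apply_same (α := fun _ => ℝ) i c y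
    calc R = |z i| := by rw [hzi, hc]
    _ ≤ ‖z‖ := norm_le_pi_norm z i
  rw [← hL, key]
  apply Finset.sum_eq_zero
  intro i _
  have h1 : ∀ y, G i (i.insertNth (b i) y) = 0 := hface i (b i) (by simp [hb, abs_of_pos hR0])
  have h2 : ∀ y, G i (i.insertNth (a i) y) = 0 := hface i (a i) (by simp [ha, abs_of_pos hR0])
  simp [h1, h2]

lemma div_thm_euc {n : ℕ} (hn : 1 ≤ n)
    (G : Fin n → EuclideanSpace ℝ (Fin n) → ℝ)
    (G' : Fin n → EuclideanSpace ℝ (Fin n) → (EuclideanSpace ℝ (Fin n) →L[ℝ] ℝ))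
    (hGc : ∀ i, Continuous (G i))
    (hGd : ∀ i x, HasFDerivAt (G i) (G' i x) x)
    (hsupp : ∀ i, HasCompactSupport (G i))
    (hint : Integrable (fun x => ∑ i, G' i x (EuclideanSpace.single i 1))) :
    ∫ x, ∑ i, G' i x (EuclideanSpace.single i 1) = 0 := by
  obtain ⟨m, rfl⟩ : ∃ m, n = m + 1 := ⟨n - 1, (Nat.succ_pred_eq_of_pos hn).symm⟩
  set eL : (Fin (m+1) → ℝ) ≃L[ℝ] EuclideanSpace ℝ (Fin (m+1)) :=
    (EuclideanSpace.equiv (Fin (m+1)) ℝ).symm with heL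
  set div : EuclideanSpace ℝ (Fin (m+1)) → ℝ :=
    fun x => ∑ i, G' i x (EuclideanSpace.single i 1) with hdiv
  have hmp : MeasurePreserving (eL : (Fin (m+1) → ℝ) → EuclideanSpace ℝ (Fin (m+1)))
      volume volume :=
    (EuclideanSpace.volume_preserving_symm_measurableEquiv_toLp (Fin (m+1))).symm
  have hemb : MeasurableEmbedding (eL : (Fin (m+1) → ℝ) → EuclideanSpace ℝ (Fin (m+1))) :=
    eL.toHomeomorph.measurableEmbedding
  have hsingle : ∀ i : Fin (m+1), (eL (Pi.single i 1) : EuclideanSpace ℝ (Fin (m+1)))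
      = EuclideanSpace.single i 1 := fun i => rfl
  have key := div_thm_pi_s6 (fun i y => G i (eL y))
      (fun i y => (G' i (eL y)).comp
        (eL : (Fin (m+1) → ℝ) →L[ℝ] EuclideanSpace ℝ (Fin (m+1))))
      (fun i => (hGc i).comp eL.continuous)
      (fun i y => (hGd i (eL y)).comp y eL.hasFDerivAt)
      (fun i => (hsupp i).comp_homeomorph eL.toHomeomorph)
      ?_
  · have h2 : ∫ y, div (eL y) = ∫ x, div x := hmp.integral_comp hemb div
    have h3 : (fun y => div (eL y)) = fun y =>
        ∑ i, ((G' i (eL y)).comp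
          (eL : (Fin (m+1) → ℝ) →L[ℝ] EuclideanSpace ℝ (Fin (m+1)))) (Pi.single i 1) := by
      funext y
      simp [hdiv, hsingle]
    show ∫ x, div x = 0
    rw [← h2, h3]
    exact key
  · have h4 : Integrable (fun y => div (eL y)) volume :=
      (hmp.integrable_comp_emb hemb).2 hint
    apply h4.congr
    filter_upwards with y
    simp [hdiv, hsingle]

lemma cpderiv_contDiff {n : ℕ} (f : EuclideanSpace ℝ (Fin n) → ℂ) (hf : ContDiff ℝ 2 f)
    (i : Fin n) : ContDiff ℝ 1 (cpderiv f i) := by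
  have h1 : ContDiff ℝ 1 (fderiv ℝ f) := hf.fderiv_right (by norm_num)
  exact (ContinuousLinearMap.apply ℝ ℂ (EuclideanSpace.single i 1)).contDiff.comp h1

lemma cpderiv_hasFDerivAt {n : ℕ} (f : EuclideanSpace ℝ (Fin n) → ℂ) (hf : ContDiff ℝ 2 f)
    (i : Fin n) (x) :
    HasFDerivAt (cpderiv f i) (fderiv ℝ (cpderiv f i) x) x :=
  ((cpderiv_contDiff f hf i).differentiable one_ne_zero).differentiableAt.hasFDerivAt

lemma u_hasFDerivAt {n : ℕ} (f : EuclideanSpace ℝ (Fin n) → ℂ) (hf : ContDiff ℝ 2 f)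
    (i : Fin n) (x) :
    HasFDerivAt (fun y => ((starRingEnd ℂ) (f y) * cpderiv f i y).im)
      (Complex.imCLM.comp
        (((starRingEnd ℂ) (f x)) • fderiv ℝ (cpderiv f i) x
          + (cpderiv f i x) •
            ((Complex.conjCLE.toContinuousLinearMap).comp (fderiv ℝ f x)))) x := by
  have hfd : HasFDerivAt f (fderiv ℝ f x) x :=
    ((hf.differentiable (by norm_num)) x).hasFDerivAt
  have hc : HasFDerivAt (fun y => (starRingEnd ℂ) (f y))
      ((Complex.conjCLE.toContinuousLinearMap).comp (fderiv ℝ f x)) x :=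
    (Complex.conjCLE.toContinuousLinearMap.hasFDerivAt).comp x hfd
  have hd := cpderiv_hasFDerivAt f hf i x
  have hmul := hc.mul hd
  exact (Complex.imCLM.hasFDerivAt).comp x hmul

lemma u_deriv_apply {n : ℕ} (f : EuclideanSpace ℝ (Fin n) → ℂ)
    (i : Fin n) (x) :
    (Complex.imCLM.comp
        (((starRingEnd ℂ) (f x)) • fderiv ℝ (cpderiv f i) x
          + (cpderiv f i x) •
            ((Complex.conjCLE.toContinuousLinearMap).comp (fderiv ℝ f x))))
      (EuclideanSpace.single i 1)
    = ((starRingEnd ℂ) (f x) * cpderiv (cpderiv f i) i x).im := by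
  have h1 : (fderiv ℝ f x) (EuclideanSpace.single i 1) = cpderiv f i x := rfl
  have h2 : (fderiv ℝ (cpderiv f i) x) (EuclideanSpace.single i 1)
      = cpderiv (cpderiv f i) i x := rfl
  simp only [ContinuousLinearMap.comp_apply, ContinuousLinearMap.add_apply,
    ContinuousLinearMap.smul_apply, h1, h2]
  have h3 : (Complex.conjCLE.toContinuousLinearMap) (cpderiv f i x)
      = (starRingEnd ℂ) (cpderiv f i x) := rfl
  rw [h3]
  have h4 : cpderiv f i x • (starRingEnd ℂ) (cpderiv f i x)
      = (Complex.normSq (cpderiv f i x) : ℂ) := by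
    rw [smul_eq_mul, Complex.mul_conj]
  rw [h4]
  simp

lemma div_identity {n : ℕ} (f V : EuclideanSpace ℝ (Fin n) → ℂ)
    (heq : ∀ x, -claplacian f x + V x * f x = 0) (x) :
    ∑ i, ((starRingEnd ℂ) (f x) * cpderiv (cpderiv f i) i x).im
      = (V x).im * Complex.normSq (f x) := by
  have h1 : ∑ i, ((starRingEnd ℂ) (f x) * cpderiv (cpderiv f i) i x).im
      = ((starRingEnd ℂ) (f x) * claplacian f x).im := by
    rw [claplacian, Finset.mul_sum]
    exact (Complex.im_sum _ _).symm
  have h2 : claplacian f x = V x * f x := by linear_combination -heq x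
  rw [h1, h2]
  have h3 : (starRingEnd ℂ) (f x) * (V x * f x)
      = V x * (Complex.normSq (f x) : ℂ) := by
    rw [← Complex.mul_conj]; ring
  rw [h3]
  simp [Complex.mul_im]

lemma euc_apply_le_norm {n : ℕ} (v : EuclideanSpace ℂ (Fin n)) (i : Fin n) :
    ‖v i‖ ≤ ‖v‖ := by
  rw [EuclideanSpace.norm_eq]
  have h1 : ‖v i‖ = Real.sqrt (‖v i‖ ^ 2) := by
    rw [Real.sqrt_sq (norm_nonneg _)]
  rw [h1]
  apply Real.sqrt_le_sqrt
  exact Finset.single_le_sum (f := fun j => ‖v j‖ ^ 2) (fun j _ => sq_nonneg _)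
    (Finset.mem_univ i)

lemma l2_mul_int {n : ℕ} (f g : EuclideanSpace ℝ (Fin n) → ℂ)
    (hf2 : MemLp f 2 (volume : Measure (EuclideanSpace ℝ (Fin n))))
    (hg2 : MemLp g 2 (volume : Measure (EuclideanSpace ℝ (Fin n))))
    (hfc : Continuous f) (hgc : Continuous g) :
    Integrable (fun x => ‖f x‖ * ‖g x‖)
      (volume : Measure (EuclideanSpace ℝ (Fin n))) := by
  have h1 : Integrable (fun x => ‖f x‖ ^ 2) volume := hf2.norm.integrable_sq
  have h2 : Integrable (fun x => ‖g x‖ ^ 2) volume := hg2.norm.integrable_sq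
  apply Integrable.mono' (h1.add h2)
  · exact ((hfc.norm).mul (hgc.norm)).aestronglyMeasurable
  · filter_upwards with x
    have h3 : |‖f x‖ * ‖g x‖| = ‖f x‖ * ‖g x‖ :=
      abs_of_nonneg (mul_nonneg (norm_nonneg _) (norm_nonneg _))
    rw [Real.norm_eq_abs, h3]
    show ‖f x‖ * ‖g x‖ ≤ ‖f x‖ ^ 2 + ‖g x‖ ^ 2
    nlinarith [sq_nonneg (‖f x‖ - ‖g x‖), mul_nonneg (norm_nonneg (f x)) (norm_nonneg (g x))]

end Aux

set_option maxHeartbeats 2000000 in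
/-- Theorem 1 of the paper (Euclidean case): if `Im V ≥ 0` and is not identically zero,
any admissible kernel element of `−Δ + V` must vanish somewhere. -/
theorem kernel_element_vanishes {n : ℕ} (hn : 1 ≤ n)
    (V f : EuclideanSpace ℝ (Fin n) → ℂ)
    (hV : Continuous V) (hVim : ∀ x, 0 ≤ (V x).im)
    (hVne : ∃ x, (V x).im ≠ 0)
    (hf : ContDiff ℝ 2 f)
    (hfL2 : MemLp f 2 (volume : Measure (EuclideanSpace ℝ (Fin n))))
    (hgradL2 : MemLp (fun x => cgrad f x) 2 (volume : Measure (EuclideanSpace ℝ (Fin n))))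
    (heq : ∀ x, -claplacian f x + V x * f x = 0) :
    ∃ x, f x = 0 := by
  by_contra hcon
  push_neg at hcon
  obtain ⟨x₀, hx₀⟩ := hVne
  have hfc : Continuous f := hf.continuous
  have hpdc : ∀ i, Continuous (cpderiv f i) := fun i => (cpderiv_contDiff f hf i).continuous
  -- the nonnegative density `g`
  set g : EuclideanSpace ℝ (Fin n) → ℝ := fun x => (V x).im * Complex.normSq (f x) with hgdef
  have hgc : Continuous g :=
    (Complex.continuous_im.comp hV).mul (Complex.continuous_normSq.comp hfc)
  have hg0 : ∀ x, 0 ≤ g x := fun x => mul_nonneg (hVim x) (Complex.normSq_nonneg _)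
  -- the components of the vector field
  set u : Fin n → EuclideanSpace ℝ (Fin n) → ℝ :=
    fun i x => ((starRingEnd ℂ) (f x) * cpderiv f i x).im with hudef
  have huc : ∀ i, Continuous (u i) := fun i =>
    Complex.continuous_im.comp ((Complex.continuous_conj.comp hfc).mul (hpdc i))
  have hubound : ∀ i x, |u i x| ≤ ‖f x‖ * ‖cpderiv f i x‖ := by
    intro i x
    calc |u i x| ≤ ‖(starRingEnd ℂ) (f x) * cpderiv f i x‖ :=
      Complex.abs_im_le_norm _
    _ = ‖f x‖ * ‖cpderiv f i x‖ := by
      rw [norm_mul, Complex.norm_conj]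
  -- L² facts
  have hpdL2 : ∀ i, MemLp (cpderiv f i) 2 (volume : Measure (EuclideanSpace ℝ (Fin n))) := by
    intro i
    apply hgradL2.of_le (hpdc i).aestronglyMeasurable
    filter_upwards with x
    exact euc_apply_le_norm (cgrad f x) i
  have hmulint : ∀ i, Integrable (fun x => ‖f x‖ * ‖cpderiv f i x‖)
      (volume : Measure (EuclideanSpace ℝ (Fin n))) :=
    fun i => l2_mul_int f (cpderiv f i) hfL2 (hpdL2 i) hfc (hpdc i)
  set Mf : EuclideanSpace ℝ (Fin n) → ℝ :=
    fun x => ∑ i, ‖f x‖ * ‖cpderiv f i x‖ with hMfdef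
  have hMint : Integrable Mf volume := integrable_finset_sum _ (fun i _ => hmulint i)
  set M : ℝ := ∫ x, Mf x with hMdef
  have hMf0 : ∀ x, 0 ≤ Mf x := fun x =>
    Finset.sum_nonneg fun i _ => mul_nonneg (norm_nonneg _) (norm_nonneg _)
  have hM0 : 0 ≤ M := integral_nonneg hMf0
  -- the bump function and uniform gradient bound
  set φ : ContDiffBump (0 : EuclideanSpace ℝ (Fin n)) := ⟨1, 2, one_pos, one_lt_two⟩ with hφdef
  have hφc : ContDiff ℝ 2 (φ : EuclideanSpace ℝ (Fin n) → ℝ) := φ.contDiff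
  have hφsupp : HasCompactSupport (φ : EuclideanSpace ℝ (Fin n) → ℝ) := φ.hasCompactSupport
  obtain ⟨C, hC⟩ := (hφsupp.fderiv (𝕜 := ℝ)).exists_bound_of_continuous
    (hφc.continuous_fderiv (by norm_num))
  have hC0 : 0 ≤ C := le_trans (norm_nonneg _) (hC 0)
  -- the key estimate
  have key : ∀ R : ℝ, 0 < R →
      (∫ x in Metric.ball (0 : EuclideanSpace ℝ (Fin n)) R, g x) ≤ C * R⁻¹ * M := by
    intro R hR
    set ℓ : EuclideanSpace ℝ (Fin n) →L[ℝ] EuclideanSpace ℝ (Fin n) :=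
      R⁻¹ • ContinuousLinearMap.id ℝ (EuclideanSpace ℝ (Fin n)) with hℓ
    have hℓnorm : ‖ℓ‖ ≤ R⁻¹ := by
      rw [hℓ]
      calc ‖R⁻¹ • ContinuousLinearMap.id ℝ (EuclideanSpace ℝ (Fin n))‖
          ≤ ‖R⁻¹‖ * ‖ContinuousLinearMap.id ℝ (EuclideanSpace ℝ (Fin n))‖ :=
        ContinuousLinearMap.opNorm_smul_le _ _
      _ ≤ R⁻¹ * 1 := by
          apply mul_le_mul (le_of_eq (by rw [Real.norm_eq_abs, abs_of_pos (by positivity)]))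
            ContinuousLinearMap.norm_id_le (norm_nonneg _) (by positivity)
      _ = R⁻¹ := mul_one _
    set χ : EuclideanSpace ℝ (Fin n) → ℝ := fun x => φ (R⁻¹ • x) with hχdef
    have hχd : ∀ x, HasFDerivAt χ ((fderiv ℝ φ (R⁻¹ • x)).comp ℓ) x := by
      intro x
      have h1 : HasFDerivAt (φ : EuclideanSpace ℝ (Fin n) → ℝ) (fderiv ℝ φ (ℓ x)) (ℓ x) :=
        ((hφc.differentiable (by norm_num)) (ℓ x)).hasFDerivAt
      exact (h1.comp x ℓ.hasFDerivAt : HasFDerivAt (fun y => φ (ℓ y)) _ x)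
    have hχbound : ∀ x, ‖(fderiv ℝ φ (R⁻¹ • x)).comp ℓ‖ ≤ C * R⁻¹ := by
      intro x
      calc ‖(fderiv ℝ φ (R⁻¹ • x)).comp ℓ‖ ≤ ‖fderiv ℝ φ (R⁻¹ • x)‖ * ‖ℓ‖ :=
        ContinuousLinearMap.opNorm_comp_le _ _
      _ ≤ C * R⁻¹ := mul_le_mul (hC _) hℓnorm (norm_nonneg _) hC0
    have hχ1 : ∀ x ∈ Metric.ball (0 : EuclideanSpace ℝ (Fin n)) R, χ x = 1 := by
      intro x hx
      apply φ.one_of_mem_closedBall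
      simp only [Metric.mem_ball, dist_zero_right] at hx
      simp only [Metric.mem_closedBall, dist_zero_right]
      have h2 : ‖R⁻¹ • x‖ ≤ 1 := by
        rw [norm_smul, Real.norm_eq_abs, abs_of_pos (inv_pos.2 hR)]
        calc R⁻¹ * ‖x‖ ≤ R⁻¹ * R := by gcongr
        _ = 1 := inv_mul_cancel₀ hR.ne'
      exact h2
    have hχ0 : ∀ x, 0 ≤ χ x := fun x => φ.nonneg
    have hχsupp : HasCompactSupport χ := by
      have h := hφsupp.comp_homeomorph
        (Homeomorph.smulOfNeZero (R⁻¹) (inv_pos.2 hR).ne')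
      exact h
    have hχcont : Continuous χ := φ.continuous.comp (continuous_const_smul _)
    -- the truncated vector field and its derivative
    set U' : Fin n → EuclideanSpace ℝ (Fin n) →
        (EuclideanSpace ℝ (Fin n) →L[ℝ] ℝ) := fun i x =>
      Complex.imCLM.comp
        (((starRingEnd ℂ) (f x)) • fderiv ℝ (cpderiv f i) x
          + (cpderiv f i x) •
            ((Complex.conjCLE.toContinuousLinearMap).comp (fderiv ℝ f x))) with hU'def
    set G : Fin n → EuclideanSpace ℝ (Fin n) → ℝ := fun i x => χ x * u i x with hGdef
    set G' : Fin n → EuclideanSpace ℝ (Fin n) →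
        (EuclideanSpace ℝ (Fin n) →L[ℝ] ℝ) := fun i x =>
      χ x • U' i x + u i x • ((fderiv ℝ φ (R⁻¹ • x)).comp ℓ) with hG'def
    have hGd : ∀ i x, HasFDerivAt (G i) (G' i x) x := fun i x =>
      (hχd x).mul (u_hasFDerivAt f hf i x)
    have hGc : ∀ i, Continuous (G i) := fun i => hχcont.mul (huc i)
    have hGsupp : ∀ i, HasCompactSupport (G i) := fun i => hχsupp.mul_right
    -- the two pieces of the divergence
    set A : EuclideanSpace ℝ (Fin n) → ℝ := fun x => χ x * g x with hAdef
    set B : EuclideanSpace ℝ (Fin n) → ℝ := fun x =>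
      ∑ i, u i x * ((fderiv ℝ φ (R⁻¹ • x)).comp ℓ) (EuclideanSpace.single i 1) with hBdef
    have hdiveq : ∀ x, ∑ i, G' i x (EuclideanSpace.single i 1) = A x + B x := by
      intro x
      have hsplit : ∀ i : Fin n, G' i x (EuclideanSpace.single i 1)
          = χ x * U' i x (EuclideanSpace.single i 1)
            + u i x * ((fderiv ℝ φ (R⁻¹ • x)).comp ℓ) (EuclideanSpace.single i 1) := by
        intro i
        simp [hG'def]
      rw [Finset.sum_congr rfl (fun i _ => hsplit i), Finset.sum_add_distrib, ← Finset.mul_sum]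
      congr 1
      rw [hAdef]
      congr 1
      have hUi : ∀ i : Fin n, U' i x (EuclideanSpace.single i 1)
          = ((starRingEnd ℂ) (f x) * cpderiv (cpderiv f i) i x).im := fun i =>
        u_deriv_apply f i x
      rw [Finset.sum_congr rfl (fun i _ => hUi i)]
      exact div_identity f V heq x
    -- integrability of the pieces
    have hA_supp : HasCompactSupport A := hχsupp.mul_right
    have hA_cont : Continuous A := hχcont.mul hgc
    have hAint : Integrable A volume := hA_cont.integrable_of_hasCompactSupport hA_supp
    have hBbound : ∀ x, ‖B x‖ ≤ (C * R⁻¹) * Mf x := by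
      intro x
      calc ‖B x‖ ≤ ∑ i, ‖u i x * ((fderiv ℝ φ (R⁻¹ • x)).comp ℓ) (EuclideanSpace.single i 1)‖ :=
        norm_sum_le _ _
      _ ≤ ∑ i, (‖f x‖ * ‖cpderiv f i x‖) * (C * R⁻¹) := by
          apply Finset.sum_le_sum
          intro i _
          rw [norm_mul]
          apply mul_le_mul (by rw [Real.norm_eq_abs]; exact hubound i x)
          · calc ‖((fderiv ℝ φ (R⁻¹ • x)).comp ℓ) (EuclideanSpace.single i 1)‖
                ≤ ‖(fderiv ℝ φ (R⁻¹ • x)).comp ℓ‖ * ‖(EuclideanSpace.single i (1:ℝ))‖ :=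
              ContinuousLinearMap.le_opNorm _ _
            _ ≤ (C * R⁻¹) * 1 := by
                apply mul_le_mul (hχbound x) _ (norm_nonneg _) (by positivity)
                rw [EuclideanSpace.norm_single]; simp
            _ = C * R⁻¹ := mul_one _
          · exact norm_nonneg _
          · exact mul_nonneg (norm_nonneg _) (norm_nonneg _)
      _ = (C * R⁻¹) * Mf x := by rw [hMfdef, Finset.mul_sum]; congr 1; funext i; ring
    have hBcont : Continuous B := by
      apply continuous_finset_sum
      intro i _
      apply (huc i).mul
      have hval : (fun x => ((fderiv ℝ φ (R⁻¹ • x)).comp ℓ) (EuclideanSpace.single i 1))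
          = fun x => (fderiv ℝ φ (R⁻¹ • x)) (ℓ (EuclideanSpace.single i 1)) := rfl
      rw [hval]
      exact (ContinuousLinearMap.apply ℝ ℝ (ℓ (EuclideanSpace.single i 1))).continuous.comp
        ((hφc.continuous_fderiv (by norm_num)).comp (continuous_const_smul _))
    have hBint : Integrable B volume := by
      apply Integrable.mono' (hMint.const_mul (C * R⁻¹)) hBcont.aestronglyMeasurable
      filter_upwards with x
      exact hBbound x
    -- apply the divergence theorem
    have hzero : (∫ x, A x) + (∫ x, B x) = 0 := by
      have hint : Integrable (fun x => ∑ i, G' i x (EuclideanSpace.single i 1)) volume := by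
        apply (hAint.add hBint).congr
        filter_upwards with x
        exact (hdiveq x).symm
      have h5 := div_thm_euc hn G G' hGc hGd hGsupp hint
      rw [integral_congr_ae (ae_of_all _ hdiveq)] at h5
      rw [← integral_add hAint hBint]
      exact h5
    -- the estimate
    have hIA : (∫ x in Metric.ball (0 : EuclideanSpace ℝ (Fin n)) R, g x) ≤ ∫ x, A x := by
      have hgint : IntegrableOn g (Metric.ball (0 : EuclideanSpace ℝ (Fin n)) R) volume := by
        apply IntegrableOn.mono_set _ Metric.ball_subset_closedBall
        exact hgc.continuousOn.integrableOn_compact (isCompact_closedBall _ _)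
      rw [← integral_indicator Metric.isOpen_ball.measurableSet]
      apply integral_mono (hgint.integrable_indicator Metric.isOpen_ball.measurableSet) hAint
      intro x
      by_cases hx : x ∈ Metric.ball (0 : EuclideanSpace ℝ (Fin n)) R
      · rw [Set.indicator_of_mem hx]
        rw [hAdef]
        simp only
        rw [hχ1 x hx, one_mul]
      · rw [Set.indicator_of_notMem hx]
        exact mul_nonneg (hχ0 x) (hg0 x)
    have hIB : -(∫ x, B x) ≤ C * R⁻¹ * M := by
      have e1 : -(∫ x, B x) ≤ |∫ x, B x| := neg_le_abs _
      have e2 : |∫ x, B x| ≤ ∫ x, ‖B x‖ := by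
        rw [← Real.norm_eq_abs]
        exact norm_integral_le_integral_norm _
      have e3 : (∫ x, ‖B x‖) ≤ ∫ x, (C * R⁻¹) * Mf x :=
        integral_mono hBint.norm (hMint.const_mul _) hBbound
      have e4 : (∫ x, (C * R⁻¹) * Mf x) = C * R⁻¹ * M := by
        rw [integral_const_mul]
      linarith
    calc (∫ x in Metric.ball (0 : EuclideanSpace ℝ (Fin n)) R, g x) ≤ ∫ x, A x := hIA
    _ = -(∫ x, B x) := by linarith
    _ ≤ C * R⁻¹ * M := hIB
  -- positivity of g near x₀
  have hgx₀ : 0 < g x₀ :=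
    mul_pos (lt_of_le_of_ne (hVim x₀) (Ne.symm hx₀)) (Complex.normSq_pos.2 (hcon x₀))
  have hopen : IsOpen {y | g x₀ / 2 < g y} := isOpen_lt continuous_const hgc
  obtain ⟨ε, hε, hball⟩ := Metric.isOpen_iff.1 hopen x₀ (by simp; linarith)
  set c : ℝ := (g x₀ / 2) * (volume (Metric.ball x₀ ε)).toReal with hcdef
  have hvolpos : 0 < (volume (Metric.ball x₀ ε)).toReal :=
    ENNReal.toReal_pos (Metric.measure_ball_pos volume x₀ hε).ne' measure_ball_lt_top.ne
  have hc : 0 < c := mul_pos (by linarith) hvolpos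
  -- lower bound for large R
  have hlow : ∀ R : ℝ, ‖x₀‖ + ε ≤ R →
      c ≤ ∫ x in Metric.ball (0 : EuclideanSpace ℝ (Fin n)) R, g x := by
    intro R hRge
    have hginton : IntegrableOn g (Metric.ball (0 : EuclideanSpace ℝ (Fin n)) R) volume := by
      apply IntegrableOn.mono_set _ Metric.ball_subset_closedBall
      exact hgc.continuousOn.integrableOn_compact (isCompact_closedBall _ _)
    have hsub : Metric.ball x₀ ε ⊆ Metric.ball (0 : EuclideanSpace ℝ (Fin n)) R := by
      intro y hy
      simp only [Metric.mem_ball, dist_zero_right]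
      calc ‖y‖ = ‖y - x₀ + x₀‖ := by rw [sub_add_cancel]
      _ ≤ ‖y - x₀‖ + ‖x₀‖ := norm_add_le _ _
      _ < ε + ‖x₀‖ := by
          apply add_lt_add_left
          rw [← dist_eq_norm]
          exact hy
      _ ≤ R := by linarith
    have h6 : c ≤ ∫ x in Metric.ball x₀ ε, g x := by
      rw [hcdef]
      have h6' := setIntegral_ge_of_const_le Metric.isOpen_ball.measurableSet
        measure_ball_lt_top.ne (fun x hx => (hball hx).le) (hginton.mono_set hsub)
      refine le_trans (le_of_eq ?_) h6'
      rw [smul_eq_mul, measureReal_def, mul_comm]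
    calc c ≤ ∫ x in Metric.ball x₀ ε, g x := h6
    _ ≤ ∫ x in Metric.ball (0 : EuclideanSpace ℝ (Fin n)) R, g x := by
        apply setIntegral_mono_set hginton
        · filter_upwards with x using hg0 x
        · exact HasSubset.Subset.eventuallyLE hsub
  -- contradiction
  set R : ℝ := max (‖x₀‖ + ε) (C * M / c + 1) with hRdef
  have hR1 : ‖x₀‖ + ε ≤ R := le_max_left _ _
  have hR2 : C * M / c + 1 ≤ R := le_max_right _ _
  have hRpos : 0 < R := lt_of_lt_of_le (by positivity) hR2
  have h7 : c ≤ C * R⁻¹ * M := le_trans (hlow R hR1) (key R hRpos)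
  have h8 : C * R⁻¹ * M < c := by
    rw [mul_comm C R⁻¹, mul_assoc, inv_mul_eq_div, div_lt_iff₀ hRpos]
    calc C * M < C * M + c := by linarith
    _ = c * (C * M / c + 1) := by field_simp
    _ ≤ c * R := by
        apply mul_le_mul_of_nonneg_left hR2 hc.le
  linarith
end
end

section
/- Let n ≥ 1, let V : ℝⁿ → ℝ be a continuous real-valued function, let φ : ℝⁿ → ℂ be a C² function, and set f = exp ∘ φ. Then the real vector field x ↦ |f(x)|²·∇(Im φ)(x) satisfies div(|f|²·∇(Im φ)) = 0 at every point of ℝⁿ, provided -Δf + V·f = 0 on ℝⁿ. -/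
noncomputable section

open MeasureTheory Complex

/-- For a real potential `V` and `f = exp ∘ φ` in the kernel of `−Δ + V`,
the real vector field `|f|² ∇(Im φ)` is divergence free. -/
theorem div_abs_sq_grad_im_eq_zero {n : ℕ} (hn : 1 ≤ n)
    (V : EuclideanSpace ℝ (Fin n) → ℝ) (hV : Continuous V)
    (φ : EuclideanSpace ℝ (Fin n) → ℂ) (hφ : ContDiff ℝ 2 φ)
    (f : EuclideanSpace ℝ (Fin n) → ℂ) (hf : f = fun x => Complex.exp (φ x))
    (heq : ∀ x, -claplacian f x + (V x : ℂ) * f x = 0) :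
    ∀ x, (∑ i, rpderiv (fun y => ‖f y‖ ^ 2 * rpderiv (fun z => (φ z).im) i y) i x) = 0 := by
  intro x
  set e : Fin n → EuclideanSpace ℝ (Fin n) := fun i => EuclideanSpace.single i 1 with he
  have hφd : Differentiable ℝ φ := hφ.differentiable two_ne_zero
  have hgd : ∀ i : Fin n, Differentiable ℝ (fun y => fderiv ℝ φ y (e i)) := by
    intro i
    exact (ContinuousLinearMap.apply ℝ ℂ (e i)).differentiable.comp
      ((hφ.fderiv_right (by norm_num)).differentiable one_ne_zero)
  -- first derivative of f = exp ∘ φ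
  have hDf : ∀ (i : Fin n) (y : EuclideanSpace ℝ (Fin n)), cpderiv f i y
      = Complex.exp (φ y) * fderiv ℝ φ y (e i) := by
    intro i y
    have h1 : HasFDerivAt f (Complex.exp (φ y) • fderiv ℝ φ y) y := by
      rw [hf]; exact (hφd y).hasFDerivAt.cexp
    simp only [cpderiv]
    rw [h1.fderiv]
    simp [he]
  -- second derivative of f
  have hD2f : ∀ i : Fin n, cpderiv (cpderiv f i) i x
      = Complex.exp (φ x) *
        (fderiv ℝ (fun y => fderiv ℝ φ y (e i)) x (e i)
          + fderiv ℝ φ x (e i) * fderiv ℝ φ x (e i)) := by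
    intro i
    have hfun : cpderiv f i = fun y => Complex.exp (φ y) * fderiv ℝ φ y (e i) :=
      funext fun y => hDf i y
    rw [hfun]
    have h1 : HasFDerivAt (fun z => Complex.exp (φ z))
        (Complex.exp (φ x) • fderiv ℝ φ x) x := (hφd x).hasFDerivAt.cexp
    have h2 : HasFDerivAt (fun y => fderiv ℝ φ y (e i))
        (fderiv ℝ (fun y => fderiv ℝ φ y (e i)) x) x := ((hgd i) x).hasFDerivAt
    have h3 : HasFDerivAt (fun y => Complex.exp (φ y) * fderiv ℝ φ y (e i)) _ x := h1.mul h2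
    simp only [cpderiv]
    rw [h3.fderiv]
    simp [he]
    ring
  -- the Schrödinger equation gives the complex identity
  have hS : (∑ i, (fderiv ℝ (fun y => fderiv ℝ φ y (e i)) x (e i)
      + fderiv ℝ φ x (e i) * fderiv ℝ φ x (e i))) = (V x : ℂ) := by
    have h0 := heq x
    have hL : claplacian f x
        = Complex.exp (φ x) * ∑ i, (fderiv ℝ (fun y => fderiv ℝ φ y (e i)) x (e i)
          + fderiv ℝ φ x (e i) * fderiv ℝ φ x (e i)) := by
      simp only [claplacian]
      rw [Finset.mul_sum]
      exact Finset.sum_congr rfl fun i _ => hD2f i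
    rw [hL, hf] at h0
    beta_reduce at h0
    have hne := Complex.exp_ne_zero (φ x)
    have h1 : Complex.exp (φ x) * (∑ i, (fderiv ℝ (fun y => fderiv ℝ φ y (e i)) x (e i)
        + fderiv ℝ φ x (e i) * fderiv ℝ φ x (e i)))
        = Complex.exp (φ x) * (V x : ℂ) := by linear_combination -h0
    exact mul_left_cancel₀ hne h1
  have hSim : (∑ i, (fderiv ℝ (fun y => fderiv ℝ φ y (e i)) x (e i)
      + fderiv ℝ φ x (e i) * fderiv ℝ φ x (e i))).im = 0 := by
    rw [hS]; exact Complex.ofReal_im _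
  -- real-part and imaginary-part first derivatives
  have him : ∀ (i : Fin n) (y : EuclideanSpace ℝ (Fin n)),
      rpderiv (fun z => (φ z).im) i y = (fderiv ℝ φ y (e i)).im := by
    intro i y
    have h1 : HasFDerivAt (fun z => (φ z).im)
        (Complex.imCLM.comp (fderiv ℝ φ y)) y :=
      (Complex.imCLM.hasFDerivAt).comp y (hφd y).hasFDerivAt
    simp only [rpderiv]
    rw [h1.fderiv]
    rfl
  -- norm of f
  have hnorm : ∀ y, ‖f y‖ ^ 2 = Real.exp (2 * (φ y).re) := by
    intro y
    rw [hf]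
    rw [Complex.norm_exp, sq, ← Real.exp_add, two_mul]
  -- the divergence terms
  have hterm : ∀ i : Fin n,
      rpderiv (fun y => ‖f y‖ ^ 2 * rpderiv (fun z => (φ z).im) i y) i x
        = Real.exp (2 * (φ x).re) *
            ((fderiv ℝ (fun y => fderiv ℝ φ y (e i)) x (e i)).im
              + 2 * (fderiv ℝ φ x (e i)).re * (fderiv ℝ φ x (e i)).im) := by
    intro i
    have hfun : (fun y => ‖f y‖ ^ 2 * rpderiv (fun z => (φ z).im) i y)
        = fun y => Real.exp (2 * (φ y).re) * (fderiv ℝ φ y (e i)).im := by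
      funext y; rw [hnorm y, him i y]
    rw [hfun]
    have hvd : HasFDerivAt (fun y => (φ y).re)
        (Complex.reCLM.comp (fderiv ℝ φ x)) x :=
      (Complex.reCLM.hasFDerivAt).comp x (hφd x).hasFDerivAt
    have hc : HasFDerivAt (fun y => Real.exp (2 * (φ y).re))
        (Real.exp (2 * (φ x).re) • ((2:ℝ) • (Complex.reCLM.comp (fderiv ℝ φ x)))) x :=
      (hvd.const_mul (2:ℝ)).exp
    have hd : HasFDerivAt (fun y => (fderiv ℝ φ y (e i)).im)
        (Complex.imCLM.comp (fderiv ℝ (fun y => fderiv ℝ φ y (e i)) x)) x :=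
      (Complex.imCLM.hasFDerivAt).comp x ((hgd i) x).hasFDerivAt
    have h3 : HasFDerivAt (fun y => Real.exp (2 * (φ y).re) * (fderiv ℝ φ y (e i)).im) _ x :=
      hc.mul hd
    simp only [rpderiv]
    rw [h3.fderiv]
    simp [he]
    ring
  calc (∑ i, rpderiv (fun y => ‖f y‖ ^ 2 * rpderiv (fun z => (φ z).im) i y) i x)
      = ∑ i, Real.exp (2 * (φ x).re) *
            ((fderiv ℝ (fun y => fderiv ℝ φ y (e i)) x (e i)).im
              + 2 * (fderiv ℝ φ x (e i)).re * (fderiv ℝ φ x (e i)).im) :=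
        Finset.sum_congr rfl fun i _ => hterm i
    _ = Real.exp (2 * (φ x).re) * (∑ i, (fderiv ℝ (fun y => fderiv ℝ φ y (e i)) x (e i)
          + fderiv ℝ φ x (e i) * fderiv ℝ φ x (e i))).im := by
        rw [Complex.im_sum, Finset.mul_sum]
        refine Finset.sum_congr rfl fun i _ => ?_
        simp [Complex.add_im, Complex.mul_im]
        ring
    _ = 0 := by rw [hSim, mul_zero]
end
end

section
/- Let h : ℝⁿ → ℝ be a C¹ function with h(x) > 0 for all x, and let u : ℝⁿ → ℝ be a C² bounded function such that div(h·∇u) = 0 on ℝⁿ and the function x ↦ √(h(x))·∇u(x) is square integrable on ℝⁿ, and the vector field x ↦ h(x)·∇u(x) is integrable on ℝⁿ. Then ∇u(x) = 0 for every x ∈ ℝⁿ, i.e. u is constant. -/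
noncomputable section

open MeasureTheory Complex

namespace LiouvilleAux

open Finset Set Filter

variable {n : ℕ}

lemma contDiff_rpderiv {u : EuclideanSpace ℝ (Fin n) → ℝ} (hu : ContDiff ℝ 2 u) (i : Fin n) :
    ContDiff ℝ 1 (rpderiv u i) :=
  (hu.fderiv_right (by norm_num)).clm_apply contDiff_const

lemma rpderiv_mul {a b : EuclideanSpace ℝ (Fin n) → ℝ} {x} (ha : DifferentiableAt ℝ a x)
    (hb : DifferentiableAt ℝ b x) (i : Fin n) :
    rpderiv (fun y => a y * b y) i x = rpderiv a i x * b x + a x * rpderiv b i x := by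
  unfold rpderiv
  rw [fderiv_fun_mul ha hb]
  simp only [ContinuousLinearMap.add_apply, ContinuousLinearMap.smul_apply, smul_eq_mul]
  ring

lemma arith {mR C ε : ℝ} (hm : 0 ≤ mR) (hC : 0 ≤ C) (hε : 0 < ε) :
    (mR+1) * (2*C*(ε / (2 * ((mR+1) * (2 * C + 2) + 1)))) ≤ ε / 2 := by
  have hd : (0:ℝ) < 2 * ((mR+1) * (2 * C + 2) + 1) := by nlinarith
  have h1 : (mR+1) * (2*C*(ε / (2 * ((mR+1) * (2 * C + 2) + 1))))
      = ((mR+1) * (2*C)) * ε / (2 * ((mR+1) * (2 * C + 2) + 1)) := by ring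
  rw [h1, div_le_div_iff₀ hd two_pos]
  nlinarith [mul_nonneg hε.le hm, mul_nonneg hε.le hC, mul_nonneg (mul_nonneg hε.le hm) hC]

lemma abs_apply_le_norm (v : EuclideanSpace ℝ (Fin n)) (i : Fin n) : |v i| ≤ ‖v‖ := by
  rw [EuclideanSpace.norm_eq, ← Real.sqrt_sq_eq_abs]
  apply Real.sqrt_le_sqrt
  calc v i ^ 2 ≤ ∑ j, v j ^ 2 :=
        Finset.single_le_sum (f := fun j => v j ^ 2) (fun j _ => sq_nonneg _) (Finset.mem_univ i)
    _ = ∑ j, ‖v j‖ ^ 2 := by simp [Real.norm_eq_abs, sq_abs]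

lemma norm_sq_eq (v : EuclideanSpace ℝ (Fin n)) : ‖v‖ ^ 2 = ∑ i, v i ^ 2 := by
  rw [EuclideanSpace.norm_eq, Real.sq_sqrt (by positivity)]
  simp [Real.norm_eq_abs, sq_abs]

-- transfer lemma
lemma fderiv_comp_symm {m : ℕ} (g : EuclideanSpace ℝ (Fin (m+1)) → ℝ)
    (x : Fin (m+1) → ℝ)
    (hg : DifferentiableAt ℝ g ((PiLp.continuousLinearEquiv 2 ℝ (fun _ : Fin (m+1) => ℝ)).symm x))
    (i : Fin (m+1)) :
    fderiv ℝ (fun y => g ((PiLp.continuousLinearEquiv 2 ℝ (fun _ : Fin (m+1) => ℝ)).symm y)) x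
      (Pi.single i 1)
      = rpderiv g i ((PiLp.continuousLinearEquiv 2 ℝ (fun _ : Fin (m+1) => ℝ)).symm x) := by
  set e := PiLp.continuousLinearEquiv 2 ℝ (fun _ : Fin (m+1) => ℝ)
  have hd : HasFDerivAt (fun y => g (e.symm y))
      ((fderiv ℝ g (e.symm x)).comp (e.symm : (Fin (m+1) → ℝ) →L[ℝ] _)) x :=
    (hg.hasFDerivAt).comp x (e.symm.hasFDerivAt)
  rw [hd.fderiv]
  rfl

end LiouvilleAux

set_option maxHeartbeats 1000000 in
open LiouvilleAux Set Filter ENNReal NNReal in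
/-- Liouville-type step: if `h > 0` is `C¹`, `u` is `C²` and bounded, `div(h ∇u) = 0`,
`√h · ∇u` is square integrable and `h · ∇u` is integrable, then `∇u ≡ 0`,
i.e. `u` is constant. -/
theorem liouville_step {n : ℕ} (hn : 1 ≤ n)
    (h : EuclideanSpace ℝ (Fin n) → ℝ) (hh : ContDiff ℝ 1 h) (hpos : ∀ x, 0 < h x)
    (u : EuclideanSpace ℝ (Fin n) → ℝ) (hu : ContDiff ℝ 2 u)
    (hbdd : ∃ C, ∀ x, |u x| ≤ C)
    (hdiv : ∀ x, (∑ i, rpderiv (fun y => h y * rpderiv u i y) i x) = 0)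
    (hL2 : MemLp (fun x => Real.sqrt (h x) • rgrad u x) 2
      (volume : Measure (EuclideanSpace ℝ (Fin n))))
    (hL1 : Integrable (fun x => h x • rgrad u x)
      (volume : Measure (EuclideanSpace ℝ (Fin n)))) :
    (∀ x, rgrad u x = 0) ∧ ∀ x y, u x = u y := by
  obtain ⟨m, rfl⟩ := Nat.exists_eq_succ_of_ne_zero (Nat.one_le_iff_ne_zero.mp hn)
  obtain ⟨C, hC⟩ := hbdd
  have hC0 : 0 ≤ C := le_trans (abs_nonneg _) (hC 0)
  set D : EuclideanSpace ℝ (Fin (m+1)) → ℝ := fun z => h z * ∑ i, rpderiv u i z ^ 2 with hD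
  have hDcont : Continuous D :=
    (hh.continuous).mul (continuous_finset_sum _ fun i _ =>
      ((contDiff_rpderiv hu i).continuous).pow 2)
  have hDnn : ∀ z, 0 ≤ D z := fun z =>
    mul_nonneg (hpos z).le (Finset.sum_nonneg fun i _ => sq_nonneg _)
  have hDeq : ∀ z, D z = ‖Real.sqrt (h z) • rgrad u z‖ ^ 2 := by
    intro z
    rw [norm_smul, mul_pow, norm_sq_eq, Real.norm_eq_abs, _root_.sq_abs,
      Real.sq_sqrt (hpos z).le]
    rfl
  have hDint : Integrable D (volume : Measure (EuclideanSpace ℝ (Fin (m+1)))) := by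
    refine (hL2.norm.integrable_sq).congr (Filter.Eventually.of_forall fun z => ?_)
    exact (hDeq z).symm
  have key : ∫ z, D z = 0 := by
    classical
    set e := PiLp.continuousLinearEquiv 2 ℝ (fun _ : Fin (m+1) => ℝ) with he_def
    set φ : (Fin (m+1) → ℝ) → EuclideanSpace ℝ (Fin (m+1)) := fun x => e.symm x with hφ
    have hemb : MeasurableEmbedding φ :=
      (MeasurableEquiv.toLp 2 (Fin (m+1) → ℝ)).measurableEmbedding
    have hmp : MeasurePreserving φ
        (volume : Measure (Fin (m+1) → ℝ))
        (volume : Measure (EuclideanSpace ℝ (Fin (m+1)))) :=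
      (EuclideanSpace.volume_preserving_symm_measurableEquiv_toLp (Fin (m+1))).symm
    have hIep : ∫ x, D (φ x) = ∫ z, D z := hmp.integral_comp hemb D
    rw [← hIep]
    -- the vector field and its properties
    set G : Fin (m+1) → EuclideanSpace ℝ (Fin (m+1)) → ℝ :=
      fun i z => u z * (h z * rpderiv u i z) with hG
    have huc1 : ContDiff ℝ 1 u := hu.of_le (by norm_num)
    have hbc1 : ∀ i, ContDiff ℝ 1 (fun z => h z * rpderiv u i z) := fun i =>
      hh.mul (contDiff_rpderiv hu i)
    have hGc1 : ∀ i, ContDiff ℝ 1 (G i) := fun i => huc1.mul (hbc1 i)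
    set F : Fin (m+1) → (Fin (m+1) → ℝ) → ℝ := fun i x => G i (φ x) with hF
    have hFc1 : ∀ i, ContDiff ℝ 1 (F i) := fun i => (hGc1 i).comp e.symm.contDiff
    -- divergence identity
    have hdivF : ∀ x, ∑ i, fderiv ℝ (F i) x (Pi.single i 1) = D (φ x) := by
      intro x
      have h1 : ∀ i : Fin (m+1), fderiv ℝ (F i) x (Pi.single i 1) = rpderiv (G i) i (φ x) :=
        fun i => fderiv_comp_symm (G i) x (((hGc1 i).differentiable one_ne_zero) _) i
      have h2 : ∀ i : Fin (m+1), rpderiv (G i) i (φ x)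
          = rpderiv u i (φ x) * (h (φ x) * rpderiv u i (φ x))
            + u (φ x) * rpderiv (fun y => h y * rpderiv u i y) i (φ x) := fun i =>
        rpderiv_mul (huc1.differentiable one_ne_zero _) ((hbc1 i).differentiable one_ne_zero _) i
      calc ∑ i, fderiv ℝ (F i) x (Pi.single i 1)
          = ∑ i, (rpderiv u i (φ x) * (h (φ x) * rpderiv u i (φ x))
              + u (φ x) * rpderiv (fun y => h y * rpderiv u i y) i (φ x)) := by
            refine Finset.sum_congr rfl fun i _ => ?_
            rw [h1 i, h2 i]
        _ = (∑ i, h (φ x) * rpderiv u i (φ x) ^ 2)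
              + u (φ x) * ∑ i, rpderiv (fun y => h y * rpderiv u i y) i (φ x) := by
            rw [Finset.sum_add_distrib, Finset.mul_sum]
            congr 1
            · exact Finset.sum_congr rfl fun i _ => by ring
        _ = D (φ x) := by
            rw [hdiv (φ x), mul_zero, add_zero]
            simp only [hD, Finset.mul_sum]
    -- integrability of D ∘ φ
    have hDpc : Continuous (fun x => D (φ x)) := hDcont.comp e.symm.continuous
    have hDpint : Integrable (fun x => D (φ x)) (volume : Measure (Fin (m+1) → ℝ)) :=
      (hmp.integrable_comp_emb hemb).mpr hDint
    -- divergence theorem on boxes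
    have hdivthm : ∀ t : ℝ, 0 < t →
        ∫ x in Set.Icc (fun _ => -t) (fun _ => t : Fin (m+1) → ℝ), D (φ x)
          = ∑ i : Fin (m+1),
            ((∫ y in Set.Icc ((fun (_ : Fin (m+1)) => -t) ∘ i.succAbove)
                ((fun (_ : Fin (m+1)) => t) ∘ i.succAbove), F i (i.insertNth t y))
             - ∫ y in Set.Icc ((fun (_ : Fin (m+1)) => -t) ∘ i.succAbove)
                ((fun (_ : Fin (m+1)) => t) ∘ i.succAbove), F i (i.insertNth (-t) y)) := by
      intro t ht
      have hle : (fun (_ : Fin (m+1)) => -t) ≤ (fun _ => t) := fun _ => by dsimp; linarith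
      have H := MeasureTheory.integral_divergence_of_hasFDerivAt_off_countable'
        (fun _ => -t) (fun _ => t) hle F (fun i x => fderiv ℝ (F i) x) ∅ Set.countable_empty
        (fun i => ((hFc1 i).continuous).continuousOn)
        (fun x _ i => (((hFc1 i).differentiable one_ne_zero) x).hasFDerivAt)
        (by
          apply (hDpc.continuousOn).integrableOn_compact isCompact_Icc |>.congr_fun
          · exact fun x _ => (hdivF x).symm
          · exact measurableSet_Icc)
      calc ∫ x in Set.Icc (fun _ => -t) (fun _ => t : Fin (m+1) → ℝ), D (φ x)
          = ∫ x in Set.Icc (fun _ => -t) (fun _ => t : Fin (m+1) → ℝ),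
              ∑ i, fderiv ℝ (F i) x (Pi.single i 1) := by
            refine setIntegral_congr_fun measurableSet_Icc fun x _ => (hdivF x).symm
        _ = _ := H
    -- boundary weight function
    set V : EuclideanSpace ℝ (Fin (m+1)) → EuclideanSpace ℝ (Fin (m+1)) :=
      fun z => h z • rgrad u z with hV
    have hVc : Continuous V := by
      have h1 : Continuous (fun z => (fun i => h z * rpderiv u i z) :
          EuclideanSpace ℝ (Fin (m+1)) → (Fin (m+1) → ℝ)) :=
        continuous_pi fun i => hh.continuous.mul (contDiff_rpderiv hu i).continuous
      exact e.symm.continuous.comp h1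
    set N : EuclideanSpace ℝ (Fin (m+1)) → ℝ≥0∞ := fun z => (‖V z‖₊ : ℝ≥0∞) with hN
    have hNfin : ∫⁻ z, N z < ⊤ := hL1.2
    have hgmeas : ∀ i : Fin (m+1), Measurable
        (fun p : ℝ × (Fin m → ℝ) => N (φ (i.insertNth p.1 p.2))) := by
      intro i
      have h1 : Measurable (N ∘ φ) :=
        ((hVc.comp e.symm.continuous).measurable).enorm
      exact h1.comp
        ((MeasurableEquiv.piFinSuccAbove (fun _ : Fin (m+1) => ℝ) i).symm.measurable)
    set K : Fin (m+1) → ℝ → ℝ≥0∞ :=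
      fun i t => ∫⁻ y : Fin m → ℝ, N (φ (i.insertNth t y)) with hK
    have hKmeas : ∀ i, Measurable (K i) := fun i =>
      Measurable.lintegral_prod_right (hgmeas i)
    have hKtot : ∀ i, ∫⁻ t : ℝ, K i t = ∫⁻ z, N z := by
      intro i
      have hmp2 := (volume_preserving_piFinSuccAbove (fun _ : Fin (m+1) => ℝ) i).symm
      have e2 := (MeasurableEquiv.piFinSuccAbove (fun _ : Fin (m+1) => ℝ) i).symm
      have step1 : ∫⁻ z, N z = ∫⁻ x : Fin (m+1) → ℝ, N (φ x) :=
        (hmp.lintegral_comp_emb hemb N).symm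
      have step2 : ∫⁻ x : Fin (m+1) → ℝ, N (φ x)
          = ∫⁻ p : ℝ × (Fin m → ℝ), N (φ (i.insertNth p.1 p.2)) :=
        (hmp2.lintegral_comp_emb
          ((MeasurableEquiv.piFinSuccAbove (fun _ : Fin (m+1) => ℝ) i).symm.measurableEmbedding)
          (fun x => N (φ x))).symm
      rw [step1, step2, MeasureTheory.Measure.volume_eq_prod, MeasureTheory.lintegral_prod _ (hgmeas i).aemeasurable]
    have hΦmeas : ∀ i : Fin (m+1), Measurable (fun t : ℝ => K i t + K i (-t)) :=
      fun i => (hKmeas i).add ((hKmeas i).comp measurable_neg)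
    set Φ : ℝ → ℝ≥0∞ := fun t => ∑ i, (K i t + K i (-t)) with hΦ
    have hΦtot : ∫⁻ t in Set.Ioi (0:ℝ), Φ t ≠ ⊤ := by
      refine ne_top_of_le_ne_top ?_ (setLIntegral_le_lintegral (Set.Ioi (0:ℝ)) Φ)
      rw [hΦ, lintegral_finset_sum _ (fun i _ => hΦmeas i)]
      refine (ENNReal.sum_lt_top.mpr fun i _ => ?_).ne
      rw [lintegral_add_left (hKmeas i)]
      have hneg : ∫⁻ t : ℝ, K i (-t) = ∫⁻ t : ℝ, K i t :=
        (Measure.measurePreserving_neg (volume : Measure ℝ)).lintegral_comp_emb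
          (Homeomorph.neg ℝ).measurableEmbedding (K i)
      rw [hneg, hKtot i]
      exact ENNReal.add_lt_top.mpr ⟨hNfin, hNfin⟩
    have hsmall : ∀ (ε : ℝ≥0∞), ε ≠ 0 → ∀ T : ℝ, ∃ t : ℝ, T < t ∧ 0 < t ∧ Φ t < ε := by
      intro ε hε T
      by_contra hcon
      push_neg at hcon
      have hsub : ∫⁻ t in Set.Ioi (max T 0), ε ≤ ∫⁻ t in Set.Ioi (max T 0), Φ t := by
        refine setLIntegral_mono' measurableSet_Ioi fun t ht => ?_
        exact hcon t (lt_of_le_of_lt (le_max_left T 0) ht)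
          (lt_of_le_of_lt (le_max_right T 0) ht)
      rw [setLIntegral_const, Real.volume_Ioi, ENNReal.mul_top hε] at hsub
      exact hΦtot (top_le_iff.mp (hsub.trans
        (lintegral_mono_set fun t ht => lt_of_le_of_lt (le_max_right T 0) ht)))
    -- the face estimate
    have hptw : ∀ (i : Fin (m+1)) (z : EuclideanSpace ℝ (Fin (m+1))),
        |G i z| ≤ C * ‖V z‖ := by
      intro i z
      have h1 : G i z = u z * (V z i) := rfl
      rw [h1, abs_mul]
      exact mul_le_mul (hC z) (abs_apply_le_norm (V z) i) (abs_nonneg _) hC0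
    have hface : ∀ (i : Fin (m+1)) (t s : ℝ), K i s ≠ ⊤ →
        |∫ y in Set.Icc ((fun (_ : Fin (m+1)) => -t) ∘ i.succAbove)
            ((fun (_ : Fin (m+1)) => t) ∘ i.succAbove), F i (i.insertNth s y)|
          ≤ C * (K i s).toReal := by
      intro i t s hKfin
      have hinsc : Continuous (fun y : Fin m → ℝ => φ (i.insertNth s y)) :=
        e.symm.continuous.comp (continuous_const.finInsertNth i continuous_id)
      have hBc : Continuous fun y : Fin m → ℝ => F i (i.insertNth s y) :=
        (hGc1 i).continuous.comp hinsc
      have hVic : Continuous fun y : Fin m → ℝ => ‖V (φ (i.insertNth s y))‖ :=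
        (hVc.comp hinsc).norm
      have hint1 : IntegrableOn (fun y : Fin m → ℝ => |F i (i.insertNth s y)|)
          (Set.Icc ((fun (_ : Fin (m+1)) => -t) ∘ i.succAbove)
            ((fun (_ : Fin (m+1)) => t) ∘ i.succAbove)) volume :=
        (hBc.abs.continuousOn).integrableOn_compact isCompact_Icc
      have hint2 : IntegrableOn (fun y : Fin m → ℝ => C * ‖V (φ (i.insertNth s y))‖)
          (Set.Icc ((fun (_ : Fin (m+1)) => -t) ∘ i.succAbove)
            ((fun (_ : Fin (m+1)) => t) ∘ i.succAbove)) volume :=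
        ((continuous_const.mul hVic).continuousOn).integrableOn_compact isCompact_Icc
      calc |∫ y in Set.Icc ((fun (_ : Fin (m+1)) => -t) ∘ i.succAbove)
              ((fun (_ : Fin (m+1)) => t) ∘ i.succAbove), F i (i.insertNth s y)|
          ≤ ∫ y in Set.Icc ((fun (_ : Fin (m+1)) => -t) ∘ i.succAbove)
              ((fun (_ : Fin (m+1)) => t) ∘ i.succAbove), |F i (i.insertNth s y)| := by
            simpa [Real.norm_eq_abs] using norm_integral_le_integral_norm
              (μ := volume.restrict (Set.Icc ((fun (_ : Fin (m+1)) => -t) ∘ i.succAbove)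
                ((fun (_ : Fin (m+1)) => t) ∘ i.succAbove)))
              (fun y : Fin m → ℝ => F i (i.insertNth s y))
        _ ≤ ∫ y in Set.Icc ((fun (_ : Fin (m+1)) => -t) ∘ i.succAbove)
              ((fun (_ : Fin (m+1)) => t) ∘ i.succAbove),
              C * ‖V (φ (i.insertNth s y))‖ := by
            refine setIntegral_mono_on hint1 hint2 measurableSet_Icc fun y _ => ?_
            exact hptw i (φ (i.insertNth s y))
        _ = C * ∫ y in Set.Icc ((fun (_ : Fin (m+1)) => -t) ∘ i.succAbove)
              ((fun (_ : Fin (m+1)) => t) ∘ i.succAbove),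
              ‖V (φ (i.insertNth s y))‖ := by
            rw [integral_const_mul]
        _ ≤ C * (K i s).toReal := by
            refine mul_le_mul_of_nonneg_left ?_ hC0
            have hasm : AEStronglyMeasurable (fun y : Fin m → ℝ => V (φ (i.insertNth s y)))
                (volume.restrict (Set.Icc ((fun (_ : Fin (m+1)) => -t) ∘ i.succAbove)
                  ((fun (_ : Fin (m+1)) => t) ∘ i.succAbove))) :=
              ((hVc.comp hinsc).aestronglyMeasurable).restrict
            rw [integral_norm_eq_lintegral_enorm hasm]
            refine ENNReal.toReal_mono hKfin ?_
            exact setLIntegral_le_lintegral _ _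
    -- box exhaustion
    have hDpnn : ∀ x : Fin (m+1) → ℝ, 0 ≤ D (φ x) := fun x => hDnn _
    have hboxu : (⋃ k : ℕ, Set.Icc (fun _ => -(k:ℝ)) (fun _ => (k:ℝ)) :
        Set (Fin (m+1) → ℝ)) = Set.univ := by
      ext x
      simp only [Set.mem_iUnion, Set.mem_univ, iff_true, Set.mem_Icc]
      obtain ⟨k, hk⟩ := exists_nat_gt ‖x‖
      have hj : ∀ j, |x j| ≤ (k:ℝ) := fun j => by
        have h1 := norm_le_pi_norm x j
        rw [Real.norm_eq_abs] at h1
        exact h1.trans hk.le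
      exact ⟨k, fun j => (abs_le.mp (hj j)).1, fun j => (abs_le.mp (hj j)).2⟩
    have hbox : Filter.Tendsto
        (fun k : ℕ => ∫ x in Set.Icc (fun _ => -(k:ℝ)) (fun _ => (k:ℝ)), D (φ x))
        Filter.atTop (nhds (∫ x, D (φ x))) := by
      have hmono : Monotone (fun k : ℕ => (Set.Icc (fun _ => -(k:ℝ)) (fun _ => (k:ℝ)) :
          Set (Fin (m+1) → ℝ))) := by
        intro k l hkl
        apply Set.Icc_subset_Icc
        · intro j
          show -(l:ℝ) ≤ -(k:ℝ)
          exact neg_le_neg (by exact_mod_cast hkl)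
        · intro j
          show (k:ℝ) ≤ (l:ℝ)
          exact_mod_cast hkl
      have H := tendsto_setIntegral_of_monotone (fun k : ℕ => measurableSet_Icc) hmono
        (by rw [hboxu]; exact hDpint.integrableOn)
      rwa [hboxu, setIntegral_univ] at H
    -- the ε-argument
    have hmain : ∀ ε : ℝ, 0 < ε → ∫ x, D (φ x) ≤ ε := by
      intro ε hε
      obtain ⟨M, hM⟩ := Metric.tendsto_atTop.mp hbox (ε/2) (by positivity)
      have hM' := hM M le_rfl
      rw [Real.dist_eq] at hM'
      set δ : ℝ := ε / (2 * (((m:ℝ)+1) * (2 * C + 2) + 1)) with hδ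
      have hδpos : 0 < δ := by positivity
      obtain ⟨t, htM, ht0, htΦ⟩ := hsmall (ENNReal.ofReal δ)
        (by simp [ENNReal.ofReal_eq_zero, not_le, hδpos]) (M : ℝ)
      have hΦfin : Φ t ≠ ⊤ := (htΦ.trans_le le_top).ne
      have hKle : ∀ i : Fin (m+1), K i t ≤ Φ t ∧ K i (-t) ≤ Φ t := by
        intro i
        have h1 : K i t + K i (-t) ≤ Φ t :=
          Finset.single_le_sum (f := fun i => K i t + K i (-t))
            (fun _ _ => zero_le) (Finset.mem_univ i)
        exact ⟨le_trans le_self_add h1, le_trans le_add_self h1⟩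
      have hKfin : ∀ i : Fin (m+1), K i t ≠ ⊤ ∧ K i (-t) ≠ ⊤ := fun i =>
        ⟨ne_top_of_le_ne_top hΦfin (hKle i).1, ne_top_of_le_ne_top hΦfin (hKle i).2⟩
      have hKd : ∀ i : Fin (m+1), (K i t).toReal ≤ δ ∧ (K i (-t)).toReal ≤ δ := by
        intro i
        constructor
        · have := ENNReal.toReal_mono ENNReal.ofReal_ne_top
            ((hKle i).1.trans htΦ.le)
          rwa [ENNReal.toReal_ofReal hδpos.le] at this
        · have := ENNReal.toReal_mono ENNReal.ofReal_ne_top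
            ((hKle i).2.trans htΦ.le)
          rwa [ENNReal.toReal_ofReal hδpos.le] at this
      have hbnd : |∫ x in Set.Icc (fun _ => -t) (fun _ => t : Fin (m+1) → ℝ), D (φ x)|
          ≤ ((m:ℝ)+1) * (2*C*δ) := by
        rw [hdivthm t ht0]
        calc |∑ i : Fin (m+1),
              ((∫ y in Set.Icc ((fun (_ : Fin (m+1)) => -t) ∘ i.succAbove)
                  ((fun (_ : Fin (m+1)) => t) ∘ i.succAbove), F i (i.insertNth t y))
               - ∫ y in Set.Icc ((fun (_ : Fin (m+1)) => -t) ∘ i.succAbove)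
                  ((fun (_ : Fin (m+1)) => t) ∘ i.succAbove), F i (i.insertNth (-t) y))|
            ≤ ∑ i : Fin (m+1),
              |(∫ y in Set.Icc ((fun (_ : Fin (m+1)) => -t) ∘ i.succAbove)
                  ((fun (_ : Fin (m+1)) => t) ∘ i.succAbove), F i (i.insertNth t y))
               - ∫ y in Set.Icc ((fun (_ : Fin (m+1)) => -t) ∘ i.succAbove)
                  ((fun (_ : Fin (m+1)) => t) ∘ i.succAbove), F i (i.insertNth (-t) y)| :=
              Finset.abs_sum_le_sum_abs _ _
          _ ≤ ∑ _i : Fin (m+1), (2*C*δ) := by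
              refine Finset.sum_le_sum fun i _ => ?_
              have h1 := hface i t t (hKfin i).1
              have h2 := hface i t (-t) (hKfin i).2
              have h3 : C * (K i t).toReal ≤ C * δ :=
                mul_le_mul_of_nonneg_left (hKd i).1 hC0
              have h4 : C * (K i (-t)).toReal ≤ C * δ :=
                mul_le_mul_of_nonneg_left (hKd i).2 hC0
              calc |(∫ y in Set.Icc ((fun (_ : Fin (m+1)) => -t) ∘ i.succAbove)
                      ((fun (_ : Fin (m+1)) => t) ∘ i.succAbove), F i (i.insertNth t y))
                   - ∫ y in Set.Icc ((fun (_ : Fin (m+1)) => -t) ∘ i.succAbove)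
                      ((fun (_ : Fin (m+1)) => t) ∘ i.succAbove), F i (i.insertNth (-t) y)|
                  ≤ |∫ y in Set.Icc ((fun (_ : Fin (m+1)) => -t) ∘ i.succAbove)
                      ((fun (_ : Fin (m+1)) => t) ∘ i.succAbove), F i (i.insertNth t y)|
                   + |∫ y in Set.Icc ((fun (_ : Fin (m+1)) => -t) ∘ i.succAbove)
                      ((fun (_ : Fin (m+1)) => t) ∘ i.succAbove), F i (i.insertNth (-t) y)| :=
                    abs_sub _ _
                _ ≤ 2*C*δ := by linarith
          _ = ((m:ℝ)+1) * (2*C*δ) := by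
              rw [Finset.sum_const, Finset.card_univ, Fintype.card_fin, nsmul_eq_mul]
              push_cast
              ring
      have hsub : ∫ x in Set.Icc (fun _ => -(M:ℝ)) (fun _ => (M:ℝ) : Fin (m+1) → ℝ), D (φ x)
          ≤ ∫ x in Set.Icc (fun _ => -t) (fun _ => t : Fin (m+1) → ℝ), D (φ x) := by
        refine setIntegral_mono_set hDpint.integrableOn
          (Filter.Eventually.of_forall fun x => hDpnn x) ?_
        refine HasSubset.Subset.eventuallyLE (Set.Icc_subset_Icc ?_ ?_)
        · intro j
          show -t ≤ -(M:ℝ)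
          exact neg_le_neg htM.le
        · intro j
          show (M:ℝ) ≤ t
          exact htM.le
      have hδ2 : ((m:ℝ)+1) * (2*C*δ) ≤ ε / 2 := by
        rw [hδ]
        exact arith (Nat.cast_nonneg m) hC0 hε
      have h6 : ∫ x, D (φ x) < (∫ x in Set.Icc (fun _ => -(M:ℝ)) (fun _ => (M:ℝ) :
          Fin (m+1) → ℝ), D (φ x)) + ε/2 := by
        have := (abs_lt.mp hM').1
        linarith
      have h7 := le_trans hsub (le_trans (le_abs_self _) hbnd)
      linarith
    have h0le : 0 ≤ ∫ x, D (φ x) := integral_nonneg hDpnn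
    by_contra hne
    have hpos' : 0 < ∫ x, D (φ x) := lt_of_le_of_ne h0le (Ne.symm hne)
    have := hmain ((∫ x, D (φ x)) / 2) (by linarith)
    linarith


  
  have hDzero : ∀ z, D z = 0 := by
    have hae : D =ᵐ[volume] (fun _ => (0:ℝ)) :=
      (integral_eq_zero_iff_of_nonneg hDnn hDint).mp key
    have := (hDcont.ae_eq_iff_eq volume continuous_const).mp hae
    exact fun z => congrFun this z
  have hgrad : ∀ z i, rpderiv u i z = 0 := by
    intro z i
    have hs : ∑ i, rpderiv u i z ^ 2 = 0 := by
      have := hDzero z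
      simp only [hD] at this
      rcases mul_eq_zero.mp this with h' | h'
      · exact absurd h' (hpos z).ne'
      · exact h'
    have := (Finset.sum_eq_zero_iff_of_nonneg (fun i _ => sq_nonneg _)).mp hs i
      (Finset.mem_univ i)
    exact pow_eq_zero_iff (two_ne_zero) |>.mp this
  have hrg : ∀ z, rgrad u z = 0 := by
    intro z
    show (WithLp.equiv 2 (Fin (m+1) → ℝ)).symm (fun i => rpderiv u i z) = 0
    have : (fun i => rpderiv u i z) = (0 : Fin (m+1) → ℝ) := funext fun i => hgrad z i
    rw [this]
    rfl
  refine ⟨hrg, ?_⟩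
  have hfd : ∀ z, fderiv ℝ u z = 0 := by
    intro z
    apply ContinuousLinearMap.coe_injective
    refine Module.Basis.ext (EuclideanSpace.basisFun (Fin (m+1)) ℝ).toBasis fun i => ?_
    simpa [rpderiv, OrthonormalBasis.coe_toBasis, EuclideanSpace.basisFun_apply]
      using hgrad z i
  exact fun x y => is_const_of_fderiv_eq_zero (hu.differentiable (by norm_num)) hfd x y
end
end

section
/- Let a < b be real numbers, let V : ℝ → ℂ be continuous on [a,b] with Im(V(x)) ≥ 0 for all x ∈ [a,b] and Im(V) not identically zero on [a,b]. Suppose f : ℝ → ℂ is C² on [a,b], satisfies the Neumann boundary conditions f′(a) = 0 and f′(b) = 0, and satisfies −f″(x) + V(x)·f(x) = 0 for all x ∈ [a,b]. Then there exists x ∈ [a,b] with f(x) = 0. -/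
noncomputable section

open Set Complex

/-- One-dimensional case of Theorem 1: on `[a,b]` with Neumann boundary conditions,
if `Im V ≥ 0` on `[a,b]` and is not identically zero there, any `C²` solution of
`−f″ + V f = 0` on `[a,b]` must vanish somewhere in `[a,b]`.  Derivatives are
taken within `[a,b]`. -/
theorem one_dim_kernel_vanishes (a b : ℝ) (hab : a < b)
    (V : ℝ → ℂ) (hV : ContinuousOn V (Icc a b))
    (hVim : ∀ x ∈ Icc a b, 0 ≤ (V x).im)
    (hVne : ∃ x ∈ Icc a b, (V x).im ≠ 0)
    (f : ℝ → ℂ) (hf : ContDiffOn ℝ 2 f (Icc a b))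
    (hNa : derivWithin f (Icc a b) a = 0)
    (hNb : derivWithin f (Icc a b) b = 0)
    (heq : ∀ x ∈ Icc a b,
      -derivWithin (derivWithin f (Icc a b)) (Icc a b) x + V x * f x = 0) :
    ∃ x ∈ Icc a b, f x = 0 := by
  set S := Icc a b with hSdef
  have hUD : UniqueDiffOn ℝ S := uniqueDiffOn_Icc hab
  set f1 := derivWithin f S with hf1def
  set f2 := derivWithin f1 S with hf2def
  have hfd : DifferentiableOn ℝ f S := hf.differentiableOn (by norm_num)
  have hf1c : ContDiffOn ℝ 1 f1 S := hf.derivWithin hUD (by norm_num)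
  have hf1d : DifferentiableOn ℝ f1 S := hf1c.differentiableOn one_ne_zero
  have hD1 : ∀ x ∈ S, HasDerivWithinAt f (f1 x) S x :=
    fun x hx => (hfd x hx).hasDerivWithinAt
  have hD2 : ∀ x ∈ S, HasDerivWithinAt f1 (f2 x) S x :=
    fun x hx => (hf1d x hx).hasDerivWithinAt
  have hf2eq : ∀ x ∈ S, f2 x = V x * f x := by
    intro x hx
    have h := heq x hx
    linear_combination -h
  set g : ℝ → ℝ := fun x => ((starRingEnd ℂ) (f x) * f1 x).im with hgdef
  have hgD : ∀ x ∈ S, HasDerivWithinAt g ((V x).im * Complex.normSq (f x)) S x := by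
    intro x hx
    have h1 : HasDerivWithinAt (fun y => (starRingEnd ℂ) (f y) * f1 y)
        ((starRingEnd ℂ) (f1 x) * f1 x + (starRingEnd ℂ) (f x) * f2 x) S x :=
      ((hD1 x hx).star).mul (hD2 x hx)
    have h2 := Complex.imCLM.hasFDerivAt.comp_hasDerivWithinAt x h1
    have h3 : (Complex.imCLM ((starRingEnd ℂ) (f1 x) * f1 x + (starRingEnd ℂ) (f x) * f2 x))
        = (V x).im * Complex.normSq (f x) := by
      rw [hf2eq x hx]
      simp [Complex.mul_conj', Complex.normSq_apply, Complex.add_im, Complex.mul_im]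
      ring

    rw [h3] at h2
    exact h2
  -- g is continuous on S, differentiable with nonneg deriv on the interior
  have hgc : ContinuousOn g S := fun x hx => (hgD x hx).continuousWithinAt
  have hgDat : ∀ x ∈ Ioo a b, HasDerivAt g ((V x).im * Complex.normSq (f x)) x := by
    intro x hx
    exact (hgD x (Ioo_subset_Icc_self hx)).hasDerivAt (Icc_mem_nhds hx.1 hx.2)
  have hmono : MonotoneOn g S := by
    apply monotoneOn_of_deriv_nonneg (convex_Icc a b) hgc
    · intro x hx
      rw [interior_Icc] at hx
      exact (hgDat x hx).differentiableAt.differentiableWithinAt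
    · intro x hx
      rw [interior_Icc] at hx
      rw [(hgDat x hx).deriv]
      exact mul_nonneg (hVim x (Ioo_subset_Icc_self hx)) (Complex.normSq_nonneg _)
  have hga : g a = 0 := by simp [hgdef, ← hf1def, hNa]
  have hgb : g b = 0 := by simp [hgdef, ← hf1def, hNb]
  have hg0 : ∀ x ∈ S, g x = 0 := by
    intro x hx
    have h1 : g x ≤ g b := hmono hx (right_mem_Icc.2 hab.le) hx.2
    have h2 : g a ≤ g x := hmono (left_mem_Icc.2 hab.le) hx hx.1
    linarith [hga ▸ h2, hgb ▸ h1]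
  -- hence the derivative vanishes at interior points
  have hkey : ∀ x ∈ Ioo a b, (V x).im * Complex.normSq (f x) = 0 := by
    intro x hx
    have h0 : HasDerivAt g 0 x := by
      have : g =ᶠ[nhds x] (fun _ => (0:ℝ)) := by
        filter_upwards [Icc_mem_nhds hx.1 hx.2] with y hy using hg0 y hy
      exact (hasDerivAt_const x (0:ℝ)).congr_of_eventuallyEq this
    exact (hgDat x hx).unique h0
  -- find an interior point where Im V > 0
  obtain ⟨x₀, hx₀S, hx₀ne⟩ := hVne
  have hx₀pos : 0 < (V x₀).im := lt_of_le_of_ne (hVim x₀ hx₀S) (Ne.symm hx₀ne)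
  have hclos : x₀ ∈ closure (Ioo a b) := by
    rw [closure_Ioo hab.ne]; exact hx₀S
  have hnebot : (nhdsWithin x₀ (Ioo a b)).NeBot := mem_closure_iff_nhdsWithin_neBot.1 hclos
  have hVcont : ContinuousWithinAt (fun y => (V y).im) (Ioo a b) x₀ :=
    ((Complex.continuous_im.comp_continuousOn hV) x₀ hx₀S).mono Ioo_subset_Icc_self
  have hev : ∀ᶠ y in nhdsWithin x₀ (Ioo a b), 0 < (V y).im :=
    hVcont.eventually (eventually_gt_nhds hx₀pos)
  have hmem : ∀ᶠ y in nhdsWithin x₀ (Ioo a b), y ∈ Ioo a b := eventually_mem_nhdsWithin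
  obtain ⟨y, hy1, hy2⟩ := (hev.and hmem).exists
  refine ⟨y, Ioo_subset_Icc_self hy2, ?_⟩
  have := hkey y hy2
  have hns : Complex.normSq (f y) = 0 := by
    rcases mul_eq_zero.1 this with h | h
    · exact absurd h hy1.ne'
    · exact h
  exact Complex.normSq_eq_zero.1 hns
end
end

section
/- Let a < b be real numbers, let V : ℝ → ℝ be continuous on [a,b], and let φ : ℝ → ℂ be C² on [a,b] with f = exp ∘ φ satisfying the Neumann boundary conditions f′(a) = 0 and f′(b) = 0 and the equation −f″(x) + V(x)·f(x) = 0 for all x ∈ [a,b]. Then Im φ is constant on [a,b]. -/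
noncomputable section

open Set Complex

/-- One-dimensional case of Theorem 2: on `[a,b]` with Neumann boundary conditions and
real-valued continuous potential `V`, if `f = exp ∘ φ` with `φ` of class `C²` on `[a,b]`
solves `−f″ + V f = 0` on `[a,b]`, then `Im φ` is constant on `[a,b]`.  Derivatives are
taken within `[a,b]`. -/
theorem one_dim_constant_phase (a b : ℝ) (hab : a < b)
    (V : ℝ → ℝ) (hV : ContinuousOn V (Icc a b))
    (φ : ℝ → ℂ) (hφ : ContDiffOn ℝ 2 φ (Icc a b))
    (f : ℝ → ℂ) (hf : f = fun x => Complex.exp (φ x))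
    (hNa : derivWithin f (Icc a b) a = 0)
    (hNb : derivWithin f (Icc a b) b = 0)
    (heq : ∀ x ∈ Icc a b,
      -derivWithin (derivWithin f (Icc a b)) (Icc a b) x + (V x : ℂ) * f x = 0) :
    ∀ x ∈ Icc a b, ∀ y ∈ Icc a b, (φ x).im = (φ y).im := by
  have hU : UniqueDiffOn ℝ (Icc a b) := uniqueDiffOn_Icc hab
  have ha : a ∈ Icc a b := left_mem_Icc.2 hab.le
  -- f is C²
  have hf2 : ContDiffOn ℝ 2 f (Icc a b) := by
    rw [hf]; exact Complex.contDiff_exp.comp_contDiffOn hφ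
  set f' : ℝ → ℂ := derivWithin f (Icc a b) with hf'def
  have hf'c1 : ContDiffOn ℝ 1 f' (Icc a b) :=
    hf2.derivWithin hU (by norm_num)
  have hf'diff : DifferentiableOn ℝ f' (Icc a b) := hf'c1.differentiableOn one_ne_zero
  have hfdiff : DifferentiableOn ℝ f (Icc a b) := hf2.differentiableOn (by norm_num)
  have hφdiff : DifferentiableOn ℝ φ (Icc a b) := hφ.differentiableOn (by norm_num)
  set φ' : ℝ → ℂ := derivWithin φ (Icc a b) with hφ'def
  -- second derivative of f equals V f
  have hfd : ∀ x ∈ Icc a b, HasDerivWithinAt f (f' x) (Icc a b) x :=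
    fun x hx => (hfdiff x hx).hasDerivWithinAt
  have hfd2 : ∀ x ∈ Icc a b, HasDerivWithinAt f' ((V x : ℂ) * f x) (Icc a b) x := by
    intro x hx
    have h := (hf'diff x hx).hasDerivWithinAt
    have heqx : derivWithin f' (Icc a b) x = (V x : ℂ) * f x := by
      have h2 := heq x hx; linear_combination -h2
    rwa [heqx] at h
  -- the function W = Im (conj f * f')
  set W : ℝ → ℝ := fun x => ((starRingEnd ℂ) (f x) * f' x).im with hWdef
  have hWd : ∀ x ∈ Icc a b,
      HasDerivWithinAt W (((starRingEnd ℂ) (f' x) * f' x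
        + (starRingEnd ℂ) (f x) * ((V x : ℂ) * f x)).im) (Icc a b) x := by
    intro x hx
    have h1 := ((hfd x hx).star).mul (hfd2 x hx)
    exact Complex.imCLM.hasFDerivAt.comp_hasDerivWithinAt x h1
  have hWzero : ∀ x ∈ Icc a b,
      ((starRingEnd ℂ) (f' x) * f' x + (starRingEnd ℂ) (f x) * ((V x : ℂ) * f x)).im = 0 := by
    intro x hx
    simp [Complex.add_im, Complex.mul_im, Complex.conj_re, Complex.conj_im]
    ring
  have hWconst : ∀ x ∈ Icc a b, W x = W a := by
    apply constant_of_derivWithin_zero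
    · intro x hx
      exact ((hWd x hx).congr_deriv (hWzero x hx)).differentiableWithinAt
    · intro x hx
      have hx' : x ∈ Icc a b := ⟨hx.1, hx.2.le⟩
      rw [(hWd x hx').derivWithin (hU x hx'), hWzero x hx']
  have hWa : W a = 0 := by
    simp [hWdef, ← hf'def, hNa]
  -- f' = exp φ * φ'
  have hfformula : ∀ x ∈ Icc a b, f' x = Complex.exp (φ x) * φ' x := by
    intro x hx
    have h : HasDerivWithinAt f (Complex.exp (φ x) * φ' x) (Icc a b) x := by
      rw [hf]; exact (hφdiff x hx).hasDerivWithinAt.cexp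
    exact h.derivWithin (hU x hx)
  -- conclude Im φ' = 0
  have hImφ' : ∀ x ∈ Icc a b, (φ' x).im = 0 := by
    intro x hx
    have hW0 : W x = 0 := (hWconst x hx).trans hWa
    rw [hWdef] at hW0
    simp only [hf, hfformula x hx] at hW0
    have : Complex.normSq (Complex.exp (φ x)) * (φ' x).im = 0 := by
      rw [← hW0]
      simp [Complex.normSq_apply, Complex.mul_im, Complex.conj_re, Complex.conj_im,
        Complex.mul_re]
      ring
    have hne : Complex.normSq (Complex.exp (φ x)) ≠ 0 :=
      (Complex.normSq_pos.2 (Complex.exp_ne_zero _)).ne'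
    exact (mul_eq_zero.1 this).resolve_left hne
  -- Im φ has zero derivative
  have hψ : ∀ x ∈ Icc a b, (φ x).im = (φ a).im := by
    apply constant_of_derivWithin_zero
    · exact fun x hx => (Complex.imCLM.hasFDerivAt.comp_hasDerivWithinAt x
        (hφdiff x hx).hasDerivWithinAt).differentiableWithinAt
    · intro x hx
      have hx' : x ∈ Icc a b := ⟨hx.1, hx.2.le⟩
      have h : HasDerivWithinAt (fun y => (φ y).im) ((φ' x).im) (Icc a b) x :=
        Complex.imCLM.hasFDerivAt.comp_hasDerivWithinAt x (hφdiff x hx').hasDerivWithinAt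
      rw [h.derivWithin (hU x hx'), hImφ' x hx']
  intro x hx y hy
  rw [hψ x hx, hψ y hy]
end
end
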